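/- arXiv:2309.04209 — 14 statements merged into one kernel-verified Lean document; each statement's English description precedes it below -/
import Mathlib

section
/- Let ν be a Borel probability measure on [0,1]^d, λ ≥ 0, c ∈ ℝ, and f(x) = c + λ·ν([0,x]). Let P_n = {x_0,…,x_{n-1}} ⊂ [0,1]^d be such that the reflected set {1−x_0,…,1−x_{n-1}} has non-negative local discrepancy (δ(z) ≥ 0 for all z). Then (1/n)∑_{i=0}^{n-1} f(x_i) ≥ ∫_{[0,1]^d} f(x) dx. -/
/-!
By Tonelli, `∫_{[0,1]^d} ν([0,y]) dy = ∫ vol {y ∈ [0,1]^d | t ≤ y} dν(t)`, and the inner volume is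
`∏ j (1 - t j)` for `t` in the cube and `0` otherwise. Non-negative local discrepancy of the
reflected points at `z = 1 - t` bounds `∏ j (1 - t j)` by the fraction of points `x i ≥ t`, whose
`ν`-integral is `(1/n) ∑ ν([0, x i])`. The map `s ↦ c + λ s` with `λ ≥ 0` preserves the inequality.
-/

open MeasureTheory Set
open scoped ENNReal Finset

section Orthant

variable {ι : Type*} [Fintype ι]

lemma measurableSet_setOf_snd_mem_Icc_zero_fst :
    MeasurableSet {p : (ι → ℝ) × (ι → ℝ) | p.2 ∈ Icc 0 p.1} :=
  (measurableSet_le measurable_const measurable_snd).inter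
    (measurableSet_le measurable_snd measurable_fst)

lemma measurable_measure_Icc_zero (ν : Measure (ι → ℝ)) [SFinite ν] :
    Measurable fun y : ι → ℝ => ν (Icc 0 y) :=
  measurable_measure_prodMk_left measurableSet_setOf_snd_mem_Icc_zero_fst

lemma lintegral_measure_Icc_zero_eq (μ ν : Measure (ι → ℝ)) [SFinite μ] [SFinite ν] :
    ∫⁻ y, ν (Icc 0 y) ∂μ = ∫⁻ t, μ {y | t ∈ Icc 0 y} ∂ν :=
  calc ∫⁻ y, ν (Icc 0 y) ∂μ = μ.prod ν {p | p.2 ∈ Icc 0 p.1} :=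
        (Measure.prod_apply measurableSet_setOf_snd_mem_Icc_zero_fst).symm
    _ = ∫⁻ t, μ {y | t ∈ Icc 0 y} ∂ν :=
        Measure.prod_apply_symm measurableSet_setOf_snd_mem_Icc_zero_fst

end Orthant

/-- `δ(z; q) ≥ 0` for all `z ∈ [0,1]^d`, counting points in the box `[0, z)` without requiring
`0 ≤ q i`. -/
def NonnegLocalDiscrepancy {ι : Type*} [Fintype ι] {n : ℕ} (q : Fin n → ι → ℝ) : Prop :=
  ∀ z : ι → ℝ, (∀ j, z j ∈ Icc (0 : ℝ) 1) →
    ∏ j, z j ≤ (Nat.card {i : Fin n // ∀ j, q i j < z j} : ℝ) / n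

section ReflectedNNLD

open scoped Classical

variable {ι : Type*} [Fintype ι] {n : ℕ} {x : Fin n → ι → ℝ}

lemma prod_one_sub_le_card_div
    (hnnld : NonnegLocalDiscrepancy (1 - x))
    {t : ι → ℝ} (ht : t ∈ Icc 0 1) :
    ∏ j, (1 - t j) ≤ (#{i | t ∈ Icc 0 (x i)} : ℝ) / n := by
  refine (hnnld (1 - t) fun j => ⟨sub_nonneg.2 (ht.2 j), sub_le_self _ (ht.1 j)⟩).trans ?_
  gcongr
  rw [Nat.card_eq_fintype_card, ← Fintype.card_subtype]
  exact Fintype.card_subtype_mono _ _ fun i hi =>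
    ⟨ht.1, fun j => ((sub_lt_sub_iff_left 1).1 (hi j)).le⟩

lemma restrict_Icc_setOf_mem_Icc_zero_le (hn : 0 < n) (hnnld : NonnegLocalDiscrepancy (1 - x))
    (t : ι → ℝ) :
    volume.restrict (Icc (0 : ι → ℝ) 1) {y | t ∈ Icc 0 y} ≤
      (n : ℝ≥0∞)⁻¹ * #{i | t ∈ Icc 0 (x i)} := by
  rw [Measure.restrict_apply' measurableSet_Icc]
  by_cases ht : t ∈ Icc 0 1
  · have hslice : {y | t ∈ Icc 0 y} ∩ Icc 0 1 = Icc t 1 := by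
      ext y
      simp only [mem_inter_iff, mem_ofPred_eq, mem_Icc]
      exact ⟨fun h => ⟨h.1.2, h.2.2⟩, fun h => ⟨⟨ht.1, h.1⟩, ht.1.trans h.1, h.2⟩⟩
    rw [hslice, Real.volume_Icc_pi]
    calc ∏ j, ENNReal.ofReal ((1 : ι → ℝ) j - t j) = ENNReal.ofReal (∏ j, (1 - t j)) :=
          (ENNReal.ofReal_prod_of_nonneg fun j _ => sub_nonneg.2 (ht.2 j)).symm
      _ ≤ ENNReal.ofReal ((#{i | t ∈ Icc 0 (x i)} : ℝ) / n) :=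
          ENNReal.ofReal_le_ofReal (prod_one_sub_le_card_div hnnld ht)
      _ = (n : ℝ≥0∞)⁻¹ * #{i | t ∈ Icc 0 (x i)} := by
          rw [ENNReal.ofReal_div_of_pos (by exact_mod_cast hn), ENNReal.ofReal_natCast,
            ENNReal.ofReal_natCast, ENNReal.div_eq_inv_mul]
  · have hslice : {y | t ∈ Icc 0 y} ∩ Icc 0 1 = ∅ :=
      eq_empty_of_forall_notMem fun y hy => ht ⟨hy.1.1, hy.1.2.trans hy.2.2⟩
    rw [hslice, measure_empty]
    exact zero_le

lemma setLIntegral_measure_Icc_zero_le (hn : 0 < n) (hnnld : NonnegLocalDiscrepancy (1 - x))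
    (ν : Measure (ι → ℝ)) [SFinite ν] :
    ∫⁻ y in Icc 0 1, ν (Icc 0 y) ≤ (n : ℝ≥0∞)⁻¹ * ∑ i, ν (Icc 0 (x i)) :=
  calc ∫⁻ y in Icc 0 1, ν (Icc 0 y)
      = ∫⁻ t, volume.restrict (Icc (0 : ι → ℝ) 1) {y | t ∈ Icc 0 y} ∂ν :=
        lintegral_measure_Icc_zero_eq _ _
    _ ≤ ∫⁻ t, (n : ℝ≥0∞)⁻¹ * ∑ i, (Icc 0 (x i)).indicator 1 t ∂ν := by
        refine lintegral_mono fun t =>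
          (restrict_Icc_setOf_mem_Icc_zero_le hn hnnld t).trans_eq ?_
        simp [indicator_apply, Finset.sum_boole]
    _ = (n : ℝ≥0∞)⁻¹ * ∑ i, ν (Icc 0 (x i)) := by
        rw [lintegral_const_mul' _ _ (by simp [hn.ne']),
          lintegral_finsetSum _ fun i _ => measurable_one.indicator measurableSet_Icc]
        simp only [lintegral_indicator_one measurableSet_Icc]

lemma setIntegral_measure_Icc_zero_le (hn : 0 < n) (hnnld : NonnegLocalDiscrepancy (1 - x))
    (ν : Measure (ι → ℝ)) [IsFiniteMeasure ν] :
    ∫ y in Icc 0 1, (ν (Icc 0 y)).toReal ≤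
      (1 / n : ℝ) * ∑ i, (ν (Icc 0 (x i))).toReal := by
  rw [integral_toReal (measurable_measure_Icc_zero ν).aemeasurable
    (ae_of_all _ fun y => measure_lt_top ν _)]
  have hfin : (n : ℝ≥0∞)⁻¹ * ∑ i, ν (Icc 0 (x i)) ≠ ∞ :=
    ENNReal.mul_ne_top (by simp [hn.ne']) (ENNReal.sum_ne_top.2 fun i _ => measure_ne_top ν _)
  have h := ENNReal.toReal_mono hfin (setLIntegral_measure_Icc_zero_le hn hnnld ν)
  simpa [ENNReal.toReal_mul, ENNReal.toReal_sum, measure_ne_top] using h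

end ReflectedNNLD

theorem stmt3_general (d n : ℕ) (hn : 0 < n)
    (ν : Measure (Fin d → ℝ)) [IsProbabilityMeasure ν]
    (lam c : ℝ) (hlam : 0 ≤ lam)
    (f : (Fin d → ℝ) → ℝ)
    (hf : ∀ x, f x = c + lam * (ν (Set.Icc 0 x)).toReal)
    (x : Fin n → Fin d → ℝ)
    (hnnld : ∀ z : Fin d → ℝ, (∀ j, z j ∈ Set.Icc (0:ℝ) 1) →
      ∏ j, z j ≤ (Nat.card {i : Fin n // ∀ j, 1 - x i j < z j} : ℝ) / n) :
    ∫ y in Set.Icc (0 : Fin d → ℝ) 1, f y ≤ (1 / n : ℝ) * ∑ i, f (x i) := by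
  have hvol : volume (Icc (0 : Fin d → ℝ) 1) = 1 := by simp [Real.volume_Icc_pi]
  have : IsFiniteMeasure (volume.restrict (Icc (0 : Fin d → ℝ) 1)) :=
    isFiniteMeasure_restrict.2 (by simp [hvol])
  have hint : IntegrableOn (fun y => (ν (Icc 0 y)).toReal) (Icc 0 1) :=
    Measure.integrableOn_of_bounded (by simp [hvol])
      (measurable_measure_Icc_zero ν).ennreal_toReal.aestronglyMeasurable
      (M := 1) (ae_of_all _ fun y => by
        simpa [measureReal_def] using measureReal_le_one (μ := ν) (s := Icc 0 y))
  calc ∫ y in Icc 0 1, f y = c + lam * ∫ y in Icc 0 1, (ν (Icc 0 y)).toReal := by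
        simp only [hf]
        rw [integral_add (integrable_const c) (hint.const_mul lam), integral_const,
          integral_const_mul]
        simp [measureReal_def, hvol]
    _ ≤ c + lam * ((1 / n : ℝ) * ∑ i, (ν (Icc 0 (x i))).toReal) := by
        gcongr
        exact setIntegral_measure_Icc_zero_le hn hnnld ν
    _ = (1 / n : ℝ) * ∑ i, f (x i) := by
        simp only [hf, Finset.sum_add_distrib, Finset.sum_const, Finset.card_univ,
          Fintype.card_fin, nsmul_eq_mul, ← Finset.mul_sum]
        field_simp

/-- If `f(x) = c + λ·ν([0,x])` for a Borel probability measure `ν` on `[0,1]^d` and `λ ≥ 0`,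
and the reflected point set `{1 - x_i}` has non-negative local discrepancy, then the
equal-weight rule at the `x_i` gives an upper bound for `∫_{[0,1]^d} f`. -/
theorem stmt3 (d n : ℕ) (hn : 0 < n)
    (ν : Measure (Fin d → ℝ)) [IsProbabilityMeasure ν]
    (hνsupp : ν (Set.Icc (0 : Fin d → ℝ) 1)ᶜ = 0)
    (lam c : ℝ) (hlam : 0 ≤ lam)
    (f : (Fin d → ℝ) → ℝ)
    (hf : ∀ x, f x = c + lam * (ν (Set.Icc 0 x)).toReal)
    (x : Fin n → Fin d → ℝ) (hx : ∀ i j, x i j ∈ Set.Icc (0:ℝ) 1)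
    (hnnld : ∀ z : Fin d → ℝ, (∀ j, z j ∈ Set.Icc (0:ℝ) 1) →
      ∏ j, z j ≤ (Nat.card {i : Fin n // ∀ j, 1 - x i j < z j} : ℝ) / n) :
    ∫ y in Set.Icc (0 : Fin d → ℝ) 1, f y ≤ (1 / n : ℝ) * ∑ i, f (x i) :=
  stmt3_general d n hn ν lam c hlam f hf x hnnld
end

section
/- Let ν be a Borel probability measure on [0,1]^d absolutely continuous with respect to Lebesgue measure, λ ≥ 0, c ∈ ℝ, and f(x) = c + λ·ν([0,x]). Let P_n = {x_0,…,x_{n-1}} ⊂ [0,1]^d have non-positive local discrepancy (δ(z;P_n) ≤ 0 for all z). Then (1/n)∑_{i=0}^{n-1} f(1−x_i) ≤ ∫_{[0,1]^d} f(x) dx. -/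
/-! By Tonelli, `∫_{[0,1]^d} ν([0,x]) dx = ∫ vol([y,1]) dν(y) = ∫ ∏ⱼ (1 - yⱼ) dν(y)`, while
`∑ᵢ ν([0, 1 - xᵢ]) = ∫ #{i : y ≤ 1 - xᵢ} dν(y)`. Off the hyperplanes `yⱼ = 1 - xᵢⱼ`, which are
`ν`-null because `ν ≪ vol`, the condition `y ≤ 1 - xᵢ` is equivalent to `xᵢ ∈ [0, 1 - y)`, so
non-positive local discrepancy at `z = 1 - y` bounds the integrand by `n ∏ⱼ (1 - yⱼ)`. Since
`λ ≥ 0`, the inequality passes to `f = c + λ ν([0, ·])`. -/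

open MeasureTheory Set
open scoped Finset ENNReal

section Order

variable {α : Type*} [TopologicalSpace α] [PartialOrder α] [OrderClosedTopology α]
  [SecondCountableTopology α] [MeasurableSpace α] [OpensMeasurableSpace α]

lemma measurableSet_setOf_mem_Icc (a : α) : MeasurableSet {p : α × α | p.2 ∈ Icc a p.1} :=
  (measurableSet_le measurable_const measurable_snd).inter
    (measurableSet_le measurable_snd measurable_fst)

lemma measurable_measure_Icc (ν : Measure α) [SFinite ν] (a : α) :
    Measurable fun x ↦ ν (Icc a x) :=
  measurable_measure_prodMk_left (measurableSet_setOf_mem_Icc a)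

lemma lintegral_measure_Icc (μ ν : Measure α) [SFinite μ] [SFinite ν] (a : α) :
    ∫⁻ x, ν (Icc a x) ∂μ = ∫⁻ y in Ici a, μ (Ici y) ∂ν := by
  have hS := measurableSet_setOf_mem_Icc a
  have hslice : ∀ y, μ ((fun x ↦ (x, y)) ⁻¹' {p : α × α | p.2 ∈ Icc a p.1})
      = (Ici a).indicator (fun y ↦ μ (Ici y)) y := by
    intro y
    by_cases hy : a ≤ y
    · rw [indicator_of_mem (mem_Ici.2 hy)]
      congr 1
      ext x
      simp [hy]
    · simp [hy]
  calc ∫⁻ x, ν (Icc a x) ∂μ = μ.prod ν {p : α × α | p.2 ∈ Icc a p.1} :=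
        (Measure.prod_apply hS).symm
    _ = ∫⁻ y, (Ici a).indicator (fun y ↦ μ (Ici y)) y ∂ν := by
        simp_rw [Measure.prod_apply_symm hS, hslice]
    _ = ∫⁻ y in Ici a, μ (Ici y) ∂ν := lintegral_indicator measurableSet_Ici _

lemma integrable_toReal_measure_Icc (μ ν : Measure α) [IsFiniteMeasure μ] [IsFiniteMeasure ν]
    (a : α) : Integrable (fun x ↦ (ν (Icc a x)).toReal) μ :=
  .of_bound (measurable_measure_Icc ν a).ennreal_toReal.aestronglyMeasurable (ν.real univ)
    (ae_of_all _ fun _ ↦ by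
      rw [Real.norm_of_nonneg ENNReal.toReal_nonneg]
      exact measureReal_mono (subset_univ _))

end Order

open scoped Classical in
lemma sum_measure_eq_lintegral_card {α κ : Type*} [MeasurableSpace α] (ν : Measure α)
    (s : Finset κ) {A : κ → Set α} (hA : ∀ i, MeasurableSet (A i)) :
    ∑ i ∈ s, ν (A i) = ∫⁻ y, (#{i ∈ s | y ∈ A i} : ℝ≥0∞) ∂ν := by
  have hcount (y : α) : (#{i ∈ s | y ∈ A i} : ℝ≥0∞) = ∑ i ∈ s, (A i).indicator 1 y := by
    simp [Set.indicator_apply]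
  simp_rw [hcount]
  rw [lintegral_finsetSum _ fun i _ ↦ measurable_one.indicator (hA i)]
  simp_rw [lintegral_indicator_one (hA _)]

section UnitCube

variable {ι : Type*} [Fintype ι]

def HasNonposLocalDiscrepancy {n : ℕ} (x : Fin n → ι → ℝ) : Prop :=
  ∀ z : ι → ℝ, (∀ j, z j ∈ Icc (0:ℝ) 1) →
    (Nat.card {i : Fin n // ∀ j, x i j < z j} : ℝ) / n ≤ ∏ j, z j

lemma volume_unitCube : volume (Icc (0 : ι → ℝ) 1) = 1 := by
  simp [Real.volume_Icc_pi]

instance : IsProbabilityMeasure (volume.restrict (Icc (0 : ι → ℝ) 1)) :=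
  ⟨by rw [Measure.restrict_apply_univ, volume_unitCube]⟩

lemma lintegral_unitCube_measure_Icc (ν : Measure (ι → ℝ)) [SFinite ν]
    (hν : ν (Icc 0 1)ᶜ = 0) :
    ∫⁻ x in Icc 0 1, ν (Icc 0 x) = ∫⁻ y, ∏ j, ENNReal.ofReal (1 - y j) ∂ν := by
  have hν' : ∀ᵐ y ∂ν, y ∈ Icc (0 : ι → ℝ) 1 := hν
  rw [lintegral_measure_Icc, Measure.restrict_eq_self_of_ae_mem (s := Ici 0)
    (hν'.mono fun y hy ↦ hy.1)]
  refine lintegral_congr_ae (hν'.mono fun y hy ↦ ?_)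
  have hslice : Ici y ∩ Icc 0 1 = Icc y 1 := by
    ext z
    exact ⟨fun ⟨hyz, _, hz1⟩ ↦ ⟨hyz, hz1⟩, fun ⟨hyz, hz1⟩ ↦ ⟨hyz, hy.1.trans hyz, hz1⟩⟩
  dsimp only
  rw [Measure.restrict_apply' measurableSet_Icc, hslice, Real.volume_Icc_pi]
  simp

lemma ae_ne_of_absolutelyContinuous {ν : Measure (ι → ℝ)} (hac : ν ≪ volume) (j : ι) (a : ℝ) :
    ∀ᵐ y ∂ν, y j ≠ a :=
  hac.ae_le (Measure.ae_eval_ne (fun _ : ι ↦ (volume : Measure ℝ)) j a)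

open scoped Classical in
lemma card_filter_mem_Icc_one_sub_le {n : ℕ} {x : Fin n → ι → ℝ}
    (hx : HasNonposLocalDiscrepancy x) {y : ι → ℝ} (hy : y ∈ Icc 0 1) (hne : ∀ i j, y j ≠ 1 - x i j) :
    (#{i | y ∈ Icc 0 (1 - x i)} : ℝ) ≤ n * ∏ j, (1 - y j) := by
  rcases n.eq_zero_or_pos with rfl | hn
  · simp
  have hy0 : ∀ j, 0 ≤ y j := hy.1
  have hy1 : ∀ j, y j ≤ 1 := hy.2
  have hcard : #{i | y ∈ Icc 0 (1 - x i)} = #{i | ∀ j, x i j < 1 - y j} := by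
    congr 1
    ext i
    simp only [Finset.mem_filter, Finset.mem_univ, true_and, mem_Icc, hy.1, Pi.le_def,
      Pi.sub_apply, Pi.one_apply]
    refine forall_congr' fun j ↦ ⟨fun h ↦ ?_, fun h ↦ by linarith⟩
    exact lt_of_le_of_ne (by linarith) fun h' ↦ hne i j (by linarith)
  have hz : ∀ j, 1 - y j ∈ Icc (0:ℝ) 1 := fun j ↦ ⟨by linarith [hy1 j], by linarith [hy0 j]⟩
  have := hx (fun j ↦ 1 - y j) hz
  rw [div_le_iff₀ (by positivity), Nat.card_eq_fintype_card, Fintype.card_subtype] at this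
  rw [hcard]
  linarith

open scoped Classical in
lemma sum_measure_Icc_one_sub_le {n : ℕ}
    (ν : Measure (ι → ℝ)) [SFinite ν] (hνsupp : ν (Icc 0 1)ᶜ = 0) (hac : ν ≪ volume)
    (x : Fin n → ι → ℝ)
    (hx : HasNonposLocalDiscrepancy x) :
    ∑ i, ν (Icc 0 (1 - x i)) ≤ n * ∫⁻ y in Icc 0 1, ν (Icc 0 y) := by
  rw [sum_measure_eq_lintegral_card _ _ fun _ ↦ measurableSet_Icc,
    lintegral_unitCube_measure_Icc ν hνsupp, ← lintegral_const_mul _ (by fun_prop)]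
  have hne : ∀ᵐ y ∂ν, ∀ i j, y j ≠ 1 - x i j :=
    ae_all_iff.2 fun i ↦ ae_all_iff.2 fun j ↦ ae_ne_of_absolutelyContinuous hac j _
  refine lintegral_mono_ae ((hne.and hνsupp).mono fun y ⟨hne, hy⟩ ↦ ?_)
  have hpos : ∀ j, 0 ≤ 1 - y j := fun j ↦ sub_nonneg.2 (hy.2 j)
  calc _ = ENNReal.ofReal #{i | y ∈ Icc 0 (1 - x i)} := by simp
    _ ≤ ENNReal.ofReal (n * ∏ j, (1 - y j)) :=
        ENNReal.ofReal_le_ofReal (card_filter_mem_Icc_one_sub_le hx hy hne)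
    _ = n * ∏ j, ENNReal.ofReal (1 - y j) := by
        rw [ENNReal.ofReal_mul (by positivity), ENNReal.ofReal_prod_of_nonneg fun j _ ↦ hpos j,
          ENNReal.ofReal_natCast]

lemma sum_toReal_measure_Icc_one_sub_le {n : ℕ}
    (ν : Measure (ι → ℝ)) [IsFiniteMeasure ν] (hνsupp : ν (Icc 0 1)ᶜ = 0) (hac : ν ≪ volume)
    (x : Fin n → ι → ℝ)
    (hx : HasNonposLocalDiscrepancy x) :
    ∑ i, (ν (Icc 0 (1 - x i))).toReal ≤ n * ∫ y in Icc 0 1, (ν (Icc 0 y)).toReal := by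
  have hI : ∫⁻ y in Icc (0 : ι → ℝ) 1, ν (Icc 0 y) ≠ ∞ :=
    ((lintegral_mono fun _ ↦ measure_mono (subset_univ _)).trans_lt (by simp)).ne
  rw [integral_toReal (measurable_measure_Icc ν 0).aemeasurable
      (ae_of_all _ fun _ ↦ measure_lt_top _ _),
    ← ENNReal.toReal_sum fun _ _ ↦ measure_ne_top _ _, ← ENNReal.toReal_natCast,
    ← ENNReal.toReal_mul]
  exact ENNReal.toReal_mono (by finiteness) (sum_measure_Icc_one_sub_le ν hνsupp hac x hx)

end UnitCube

theorem stmt4_general (d n : ℕ) (hn : 0 < n)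
    (ν : Measure (Fin d → ℝ)) [IsProbabilityMeasure ν]
    (hνsupp : ν (Set.Icc (0 : Fin d → ℝ) 1)ᶜ = 0)
    (hac : ν ≪ (volume : Measure (Fin d → ℝ)))
    (lam c : ℝ) (hlam : 0 ≤ lam)
    (f : (Fin d → ℝ) → ℝ)
    (hf : ∀ x, f x = c + lam * (ν (Set.Icc 0 x)).toReal)
    (x : Fin n → Fin d → ℝ)
    (hnpld : ∀ z : Fin d → ℝ, (∀ j, z j ∈ Set.Icc (0:ℝ) 1) →
      (Nat.card {i : Fin n // ∀ j, x i j < z j} : ℝ) / n ≤ ∏ j, z j) :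
    (1 / n : ℝ) * ∑ i, f (fun j => 1 - x i j) ≤ ∫ y in Set.Icc (0 : Fin d → ℝ) 1, f y := by
  have hsum : ∑ i, (ν (Icc 0 fun j ↦ 1 - x i j)).toReal
      ≤ n * ∫ y in Icc 0 1, (ν (Icc 0 y)).toReal :=
    sum_toReal_measure_Icc_one_sub_le ν hνsupp hac x hnpld
  have hint : ∫ y in Icc (0 : Fin d → ℝ) 1, f y
      = c + lam * ∫ y in Icc 0 1, (ν (Icc 0 y)).toReal := by
    simp_rw [hf]
    rw [integral_add (integrable_const c) ((integrable_toReal_measure_Icc _ ν 0).const_mul lam),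
      integral_const_mul]
    simp
  have hn' : (0 : ℝ) < n := by exact_mod_cast hn
  simp_rw [hint, hf, Finset.sum_add_distrib, ← Finset.mul_sum]
  rw [Finset.sum_const, Finset.card_univ, Fintype.card_fin, nsmul_eq_mul]
  field_simp
  linarith [mul_le_mul_of_nonneg_left hsum hlam]

/-- If `f(x) = c + λ·ν([0,x])` for a Borel probability measure `ν` on `[0,1]^d` that is
absolutely continuous w.r.t. Lebesgue measure, `λ ≥ 0`, and the point set `{x_i}` has
non-positive local discrepancy, then the equal-weight rule at the reflected points
`1 - x_i` gives a lower bound for `∫_{[0,1]^d} f`. -/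
theorem stmt4 (d n : ℕ) (hn : 0 < n)
    (ν : Measure (Fin d → ℝ)) [IsProbabilityMeasure ν]
    (hνsupp : ν (Set.Icc (0 : Fin d → ℝ) 1)ᶜ = 0)
    (hac : ν ≪ (volume : Measure (Fin d → ℝ)))
    (lam c : ℝ) (hlam : 0 ≤ lam)
    (f : (Fin d → ℝ) → ℝ)
    (hf : ∀ x, f x = c + lam * (ν (Set.Icc 0 x)).toReal)
    (x : Fin n → Fin d → ℝ) (hx : ∀ i j, x i j ∈ Set.Icc (0:ℝ) 1)
    (hnpld : ∀ z : Fin d → ℝ, (∀ j, z j ∈ Set.Icc (0:ℝ) 1) →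
      (Nat.card {i : Fin n // ∀ j, x i j < z j} : ℝ) / n ≤ ∏ j, z j) :
    (1 / n : ℝ) * ∑ i, f (fun j => 1 - x i j) ≤ ∫ y in Set.Icc (0 : Fin d → ℝ) 1, f y :=
  stmt4_general d n hn ν hνsupp hac lam c hlam f hf x hnpld
end

section
/- Any point set P_n ⊂ [0,1]^d with the NNLD property must contain the point 0 = (0,…,0). -/
/-- Any NNLD point set in `[0,1]^d` must contain the origin. -/
theorem stmt5 (d n : ℕ) (hn : 0 < n) (x : Fin n → Fin d → ℝ)
    (hx : ∀ i j, x i j ∈ Set.Icc (0:ℝ) 1)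
    (hnnld : ∀ z : Fin d → ℝ, (∀ j, z j ∈ Set.Icc (0:ℝ) 1) →
      ∏ j, z j ≤ (Nat.card {i : Fin n // ∀ j, x i j < z j} : ℝ) / n) :
    ∃ i, x i = 0 := by
  rcases Nat.eq_zero_or_pos d with hd | hd
  · subst hd
    refine ⟨⟨0, hn⟩, ?_⟩
    funext j
    exact absurd j.2 (by simp)
  by_contra h
  push_neg at h
  have hne : Nonempty (Fin n) := ⟨⟨0, hn⟩⟩
  have hdne : Nonempty (Fin d) := ⟨⟨0, hd⟩⟩
  -- max coordinate of each point
  set M : Fin n → ℝ := fun i => Finset.univ.sup' Finset.univ_nonempty (x i) with hM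
  have hMpos : ∀ i, 0 < M i := by
    intro i
    have : x i ≠ 0 := h i
    have : ∃ j, x i j ≠ 0 := by
      by_contra hc
      push_neg at hc
      exact this (funext hc)
    obtain ⟨j, hj⟩ := this
    have hj' : 0 < x i j := lt_of_le_of_ne (hx i j).1 (Ne.symm hj)
    exact lt_of_lt_of_le hj' (Finset.le_sup' (x i) (Finset.mem_univ j))
  set ε : ℝ := (Finset.univ.inf' Finset.univ_nonempty M) / 2 with hε
  have hεpos : 0 < ε := by
    apply div_pos _ two_pos
    rw [Finset.lt_inf'_iff]
    intro i _
    exact hMpos i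
  have hεle : ∀ i, 2 * ε ≤ M i := by
    intro i
    have : Finset.univ.inf' Finset.univ_nonempty M ≤ M i :=
      Finset.inf'_le M (Finset.mem_univ i)
    rw [hε]; linarith
  have hεle1 : ε ≤ 1 := by
    have := hεle ⟨0, hn⟩
    have hM1 : M ⟨0, hn⟩ ≤ 1 := by
      rw [hM]
      apply Finset.sup'_le
      intro j _
      exact (hx _ j).2
    linarith
  have key := hnnld (fun _ => ε) (fun j => ⟨le_of_lt hεpos, hεle1⟩)
  have hempty : IsEmpty {i : Fin n // ∀ j, x i j < (fun _ => ε) j} := by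
    constructor
    rintro ⟨i, hi⟩
    -- some coordinate of x i equals M i ≥ 2ε > ε
    obtain ⟨j, _, hj⟩ := Finset.exists_mem_eq_sup' Finset.univ_nonempty (x i)
    have h1 : x i j < ε := hi j
    have h2 : 2 * ε ≤ x i j := by
      have := hεle i
      rw [hM] at this
      simpa [hj] using this
    linarith
  rw [@Nat.card_of_isEmpty _ hempty] at key
  simp only [Nat.cast_zero, zero_div] at key
  simp at key
  have := pow_pos hεpos d
  linarith
end

section
/- If a point set of n points in [0,1]^d has the NNLD property, then every coordinate of every point is at most 1 − 1/n. -/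
/-- If a point set of `n` points in `[0,1]^d` has the NNLD property, then every coordinate
of every point is at most `1 - 1/n`. -/
theorem stmt6 (d n : ℕ) (hn : 0 < n) (x : Fin n → Fin d → ℝ)
    (hx : ∀ i j, x i j ∈ Set.Icc (0:ℝ) 1)
    (hnnld : ∀ z : Fin d → ℝ, (∀ j, z j ∈ Set.Icc (0:ℝ) 1) →
      ∏ j, z j ≤ (Nat.card {i : Fin n // ∀ j, x i j < z j} : ℝ) / n) :
    ∀ i j, x i j ≤ 1 - 1 / n := by
  intro i j
  set z : Fin d → ℝ := fun k => if k = j then x i j else 1 with hz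
  have hz1 : ∀ k, z k ∈ Set.Icc (0:ℝ) 1 := by
    intro k
    simp only [hz]
    split_ifs
    · exact hx i j
    · exact ⟨zero_le_one, le_refl 1⟩
  have hprod : ∏ k, z k = x i j := by
    simp [hz]
  have key := hnnld z hz1
  rw [hprod] at key
  have hcard : Nat.card {i' : Fin n // ∀ k, x i' k < z k} ≤ n - 1 := by
    have h1 : Nat.card {i' : Fin n // ∀ k, x i' k < z k}
        = (Finset.univ.filter (fun i' : Fin n => ∀ k, x i' k < z k)).card := by
      rw [Nat.card_eq_fintype_card, Fintype.card_subtype]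
    rw [h1]
    have hsub : (Finset.univ.filter (fun i' : Fin n => ∀ k, x i' k < z k))
        ⊆ Finset.univ.erase i := by
      intro i' hi'
      simp only [Finset.mem_filter, Finset.mem_univ, true_and] at hi'
      refine Finset.mem_erase.mpr ⟨?_, Finset.mem_univ _⟩
      intro he
      have := hi' j
      simp [hz, he] at this
    calc (Finset.univ.filter (fun i' : Fin n => ∀ k, x i' k < z k)).card
        ≤ (Finset.univ.erase i).card := Finset.card_le_card hsub
      _ = n - 1 := by rw [Finset.card_erase_of_mem (Finset.mem_univ i)]; simp
  have hn' : (0:ℝ) < n := by exact_mod_cast hn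
  have hle : ((Nat.card {i' : Fin n // ∀ k, x i' k < z k} : ℝ)) ≤ (n:ℝ) - 1 := by
    have h2 : ((n:ℝ) - 1) = ((n - 1 : ℕ) : ℝ) := by
      rw [Nat.cast_sub hn]; simp
    rw [h2]
    exact_mod_cast hcard
  calc x i j ≤ (Nat.card {i' : Fin n // ∀ k, x i' k < z k} : ℝ) / n := key
    _ ≤ ((n:ℝ) - 1) / n := by gcongr
    _ = 1 - 1 / n := by rw [sub_div, div_self hn'.ne']
end

section
/- Let P_n be a projection regular point set of n points in [0,1)^d with the NNLD property. Then P_n contains the point ((n−1)/n, …, (n−1)/n). -/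
/-- A projection regular NNLD point set of `n` points in `[0,1)^d` must contain the point
`((n-1)/n, …, (n-1)/n)`. -/
theorem stmt7 (d n : ℕ) (hn : 0 < n) (x : Fin n → Fin d → ℝ)
    (hx : ∀ i j, x i j ∈ Set.Ico (0:ℝ) 1)
    (hreg : ∀ j, ∃ σ : Equiv.Perm (Fin n), ∀ i, x i j = (σ i : ℕ) / n)
    (hnnld : ∀ z : Fin d → ℝ, (∀ j, z j ∈ Set.Icc (0:ℝ) 1) →
      ∏ j, z j ≤ (Nat.card {i : Fin n // ∀ j, x i j < z j} : ℝ) / n) :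
    ∃ i, ∀ j, x i j = ((n : ℝ) - 1) / n := by
  classical
  choose σ hσ using hreg
  have hn' : (0:ℝ) < n := by exact_mod_cast hn
  set a : Fin d → Fin n := fun j => (σ j).symm ⟨n-1, Nat.sub_lt hn one_pos⟩ with ha
  have hcast1 : ((n - 1 : ℕ) : ℝ) = (n:ℝ) - 1 := by
    rw [Nat.cast_sub hn, Nat.cast_one]
  have hxa : ∀ j, x (a j) j = ((n:ℝ) - 1) / n := by
    intro j
    rw [hσ, ha]
    simp only [Equiv.apply_symm_apply]
    exact congrArg (· / (n:ℝ)) hcast1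
  have hkey : ∀ j k, a j = a k := by
    intro j k
    by_contra hne
    have hjk : j ≠ k := fun h => hne (by rw [h])
    have h2 : 2 ≤ n := by
      rcases Nat.lt_or_ge n 2 with h | h
      · exact absurd (Fin.ext (by have h1 := (a j).isLt; have h2 := (a k).isLt; omega)) hne
      · exact h
    set c : ℝ := ((n:ℝ) - 1) / n with hc
    have hc0 : 0 ≤ c := by
      apply div_nonneg _ (le_of_lt hn')
      have : (1:ℝ) ≤ n := by exact_mod_cast hn
      linarith
    have hc1 : c ≤ 1 := by
      rw [div_le_one hn']; linarith
    set z : Fin d → ℝ := fun m => if m = j ∨ m = k then c else 1 with hz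
    have hzmem : ∀ m, z m ∈ Set.Icc (0:ℝ) 1 := by
      intro m
      by_cases h : m = j ∨ m = k <;> simp [hz, h, hc0, hc1]
    have hprod : ∏ m, z m = c * c := by
      have hsub : ({j, k} : Finset (Fin d)) ⊆ Finset.univ := Finset.subset_univ _
      rw [← Finset.prod_subset hsub (fun m _ hm => by
        simp only [Finset.mem_insert, Finset.mem_singleton] at hm
        push_neg at hm
        simp [hz, hm.1, hm.2])]
      rw [Finset.prod_pair hjk]
      simp [hz]
    -- count bound
    have hcard : Nat.card {i : Fin n // ∀ m, x i m < z m} ≤ n - 2 := by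
      rw [Nat.card_eq_fintype_card, Fintype.card_subtype]
      have hsub : Finset.univ.filter (fun i => ∀ m, x i m < z m) ⊆
          (Finset.univ.erase (a j)).erase (a k) := by
        intro i hi
        simp only [Finset.mem_filter] at hi
        have hp := hi.2
        rw [Finset.mem_erase, Finset.mem_erase]
        refine ⟨?_, ?_, Finset.mem_univ _⟩
        · intro h
          have hzk : z k = c := by simp [hz]
          have hlt := hp k
          rw [hzk, h, hxa k] at hlt
          exact lt_irrefl _ hlt
        · intro h
          have hzj : z j = c := by simp [hz]
          have hlt := hp j
          rw [hzj, h, hxa j] at hlt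
          exact lt_irrefl _ hlt
      calc (Finset.univ.filter (fun i => ∀ m, x i m < z m)).card
          ≤ ((Finset.univ.erase (a j)).erase (a k)).card := Finset.card_le_card hsub
        _ = n - 2 := by
            rw [Finset.card_erase_of_mem, Finset.card_erase_of_mem]
            · simp; omega
            · exact Finset.mem_univ _
            · rw [Finset.mem_erase]; exact ⟨fun h => hne h.symm, Finset.mem_univ _⟩
    have hb := hnnld z hzmem
    rw [hprod] at hb
    have hcast : (Nat.card {i : Fin n // ∀ m, x i m < z m} : ℝ) ≤ (n:ℝ) - 2 := by
      have := (Nat.cast_le (α := ℝ)).2 hcard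
      rwa [Nat.cast_sub h2, Nat.cast_ofNat] at this
    have hb2 : c * c ≤ ((n:ℝ) - 2) / n :=
      hb.trans ((div_le_div_iff_of_pos_right hn').mpr hcast)
    rw [hc, div_mul_div_comm, div_le_div_iff₀ (by positivity) hn'] at hb2
    nlinarith
  rcases d with _ | d'
  · exact ⟨⟨0, hn⟩, fun j => j.elim0⟩
  · refine ⟨a 0, fun j => ?_⟩
    rw [hkey 0 j]
    exact hxa j
end

section
/- The only projection regular point set of n points in [0,1)^d that is closed under addition modulo 1 (i.e., forms a group under coordinatewise addition mod 1) and has the NNLD property is the diagonal set {0, (1/n)·1, (2/n)·1, …, ((n−1)/n)·1}. -/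
/-!
Label the points by their coordinates: `x i j = σ_j(i) / n` with `σ_j(i) ∈ ℤ/n`. Closure under
addition mod 1 makes every transition map `ψ = σ_{j'} ∘ σ_j⁻¹` an additive bijection of `ℤ/n`,
i.e. multiplication by a unit `c`. Let `t c` be the largest multiple of `c` below `n`. The box
`[0, (t+1)/n) × [0, t c/n)` in the coordinates `j, j'` contains only the `t` points with
`σ_j(i) < t`, so NNLD forces `(t+1) c = n`; then `ψ (t+1) = 0 = ψ 0`, whence `t + 1 = n` and
`c = 1`. Hence all coordinates of every point agree.
-/

open Finset Function

variable {n : ℕ}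

lemma Int.fract_val_div_add_val_div (a b : Fin n) :
    Int.fract (((a : ℕ) : ℝ) / n + ((b : ℕ) : ℝ) / n) = (((a + b : Fin n) : ℕ) : ℝ) / n := by
  rw [Fin.val_add, ← add_div, ← Nat.cast_add, Int.fract_div_natCast_eq_div_natCast_mod]

lemma Fin.eq_of_val_div_eq {a b : Fin n} (h : ((a : ℕ) : ℝ) / n = ((b : ℕ) : ℝ) / n) : a = b := by
  have hn : (n : ℝ) ≠ 0 := Nat.cast_ne_zero.mpr (Fin.pos a).ne'
  exact Fin.ext (by exact_mod_cast (div_left_inj' hn).mp h)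

lemma Fin.val_div_lt_one (a : Fin n) : ((a : ℕ) : ℝ) / n < 1 := by
  have hn : (0 : ℝ) < n := Nat.cast_pos.mpr (Fin.pos a)
  rw [div_lt_one hn]
  exact_mod_cast a.isLt

open Fin.CommRing Fin.NatCast in
lemma Fin.map_eq_mul_map_one [NeZero n] {ψ : Fin n → Fin n}
    (hψ : ∀ a b, ψ (a + b) = ψ a + ψ b) (k : Fin n) : ψ k = k * ψ 1 := by
  let f : Fin n →+ Fin n := AddMonoidHom.mk' ψ hψ
  calc ψ k = f ((k : ℕ) • 1) := by rw [nsmul_eq_mul, mul_one, Fin.cast_val_eq_self]; rfl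
    _ = k * ψ 1 := by rw [map_nsmul, nsmul_eq_mul, Fin.cast_val_eq_self]; rfl

open Fin.CommRing in
lemma Fin.val_map_eq_mul_mod [NeZero n] {ψ : Fin n → Fin n}
    (hψ : ∀ a b, ψ (a + b) = ψ a + ψ b) (k : Fin n) :
    (ψ k : ℕ) = k * (ψ 1 : ℕ) % n := by
  rw [Fin.map_eq_mul_map_one hψ, Fin.val_mul]

/-- NNLD of the planar point set `{(k/n, ψ k/n)}`, tested on the boxes `[0, a/n) × [0, b/n)`. -/
def GraphNNLD (ψ : Fin n → Fin n) : Prop :=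
  ∀ a b, a ≤ n → b ≤ n → a * b ≤ n * #{k : Fin n | (k : ℕ) < a ∧ (ψ k : ℕ) < b}

lemma GraphNNLD.succ_mul_le [NeZero n] {ψ : Fin n → Fin n} (hNNLD : GraphNNLD ψ)
    (hψ : ∀ a b, ψ (a + b) = ψ a + ψ b) {t : ℕ} (ht : 0 < t) (htc : t * (ψ 1 : ℕ) < n) :
    (t + 1) * (ψ 1 : ℕ) ≤ n := by
  set c := (ψ 1 : ℕ)
  rcases Nat.eq_zero_or_pos c with hc0 | hc0
  · simp [hc0]
  have hcount : #{k : Fin n | (k : ℕ) < t + 1 ∧ (ψ k : ℕ) < t * c} ≤ t :=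
    calc _ ≤ #{k : Fin n | (k : ℕ) < t} := by
          refine card_le_card fun k hk => ?_
          simp only [mem_filter, mem_univ, true_and] at hk ⊢
          rw [Fin.val_map_eq_mul_mod hψ, Nat.mod_eq_of_lt (by nlinarith)] at hk
          exact Nat.lt_of_mul_lt_mul_right hk.2
      _ ≤ t := by rw [Fin.card_filter_val_lt]; exact min_le_right _ _
  have := hNNLD (t + 1) (t * c) (by nlinarith) htc.le
  nlinarith

lemma GraphNNLD.eq_id {ψ : Fin n → Fin n} (hNNLD : GraphNNLD ψ) (hinj : Injective ψ)
    (hψ : ∀ a b, ψ (a + b) = ψ a + ψ b) : ψ = id := by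
  rcases le_or_gt n 1 with hn1 | hn2
  · have : Subsingleton (Fin n) := Fin.subsingleton_iff_le_one.mpr hn1
    exact funext fun _ => Subsingleton.elim _ _
  have : NeZero n := ⟨by omega⟩
  set c := (ψ 1 : ℕ) with hc
  have hval := Fin.val_map_eq_mul_mod hψ
  have hψ0 : ψ 0 = 0 := by simpa using hψ 0 0
  have hc0 : 0 < c := by
    refine Nat.pos_of_ne_zero fun h => ?_
    have : ψ 1 = ψ 0 := by rw [hψ0]; exact Fin.ext h
    simpa [Fin.ext_iff, Fin.val_one', Nat.mod_eq_of_lt hn2] using hinj this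
  set t := (n - 1) / c
  have htc : t * c < n := by have : t * c ≤ n - 1 := Nat.div_mul_le_self _ _; omega
  have hnt : n ≤ (t + 1) * c := by
    have : n - 1 < t * c + c := Nat.lt_div_mul_add hc0
    rw [add_mul, one_mul]; omega
  have htcn : (t + 1) * c = n :=
    le_antisymm (hNNLD.succ_mul_le hψ (Nat.div_pos (by omega) hc0) htc) hnt
  have htn : t + 1 = n := by
    by_contra hne
    have hlt : t + 1 < n := lt_of_le_of_ne (htcn ▸ Nat.le_mul_of_pos_right _ hc0) hne
    have : ψ ⟨t + 1, hlt⟩ = ψ 0 := by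
      rw [hψ0]; ext; rw [hval, ← hc, htcn, Nat.mod_self]; rfl
    simpa [Fin.ext_iff] using hinj this
  have hc1 : c = 1 := by nlinarith
  funext k
  ext
  rw [hval, ← hc, hc1, mul_one, Nat.mod_eq_of_lt k.isLt, id]

section PointSet

variable {d : ℕ} {x : Fin n → Fin d → ℝ} {σ : Fin d → Equiv.Perm (Fin n)}

lemma exists_forall_perm_apply_eq_add (hσ : ∀ j i, x i j = (σ j i : ℕ) / n)
    (hgroup : ∀ i i', ∃ k, ∀ j, x k j = Int.fract (x i j + x i' j)) (i i' : Fin n) :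
    ∃ k, ∀ j, σ j k = σ j i + σ j i' := by
  obtain ⟨k, hk⟩ := hgroup i i'
  refine ⟨k, fun j => Fin.eq_of_val_div_eq ?_⟩
  rw [← hσ, hk, hσ, hσ, Int.fract_val_div_add_val_div]

lemma symm_trans_map_add (hadd : ∀ i i', ∃ k, ∀ j, σ j k = σ j i + σ j i') (j j' : Fin d)
    (a b : Fin n) :
    (σ j).symm.trans (σ j') (a + b) =
      (σ j).symm.trans (σ j') a + (σ j).symm.trans (σ j') b := by
  obtain ⟨k, hk⟩ := hadd ((σ j).symm a) ((σ j).symm b)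
  have hkj : (σ j).symm (a + b) = k := by
    rw [Equiv.symm_apply_eq, hk j, Equiv.apply_symm_apply, Equiv.apply_symm_apply]
  simp only [Equiv.trans_apply, hkj, hk j']

lemma mul_le_card_box_of_nnld (hσ : ∀ j i, x i j = (σ j i : ℕ) / n)
    (hnnld : ∀ z : Fin d → ℝ, (∀ j, z j ∈ Set.Icc (0:ℝ) 1) →
      ∏ j, z j ≤ (Nat.card {i : Fin n // ∀ j, x i j < z j} : ℝ) / n)
    {j j' : Fin d} (hjj' : j ≠ j') {a b : ℕ} (ha : a ≤ n) (hb : b ≤ n) :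
    a * b ≤ n * #{i : Fin n | (σ j i : ℕ) < a ∧ (σ j' i : ℕ) < b} := by
  rcases Nat.eq_zero_or_pos n with rfl | hn
  · simp [Nat.le_zero.mp ha]
  have hnR : (0 : ℝ) < n := Nat.cast_pos.mpr hn
  have hfrac : ∀ {m : ℕ}, m ≤ n → (m : ℝ) / n ∈ unitInterval := fun hm =>
    ⟨by positivity, (div_le_one hnR).mpr (by exact_mod_cast hm)⟩
  have hlt : ∀ {m : ℕ} {k : Fin n}, ((k : ℕ) : ℝ) / n < m / n ↔ (k : ℕ) < m := by
    intro m k; rw [div_lt_div_iff_of_pos_right hnR]; exact Nat.cast_lt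
  let z : Fin d → ℝ := fun m =>
    (if m = j then (a : ℝ) / n else 1) * (if m = j' then (b : ℝ) / n else 1)
  have hz : ∀ m, z m ∈ unitInterval := fun m =>
    unitInterval.mul_mem (by split_ifs <;> simp [hfrac ha]) (by split_ifs <;> simp [hfrac hb])
  have hprod : ∏ m, z m = (a : ℝ) / n * ((b : ℝ) / n) := by
    simp only [z, prod_mul_distrib, Fintype.prod_ite_eq']
  have hbox : ∀ i, (∀ m, x i m < z m) ↔ (σ j i : ℕ) < a ∧ (σ j' i : ℕ) < b := by
    intro i
    constructor
    · intro h
      have hj := h j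
      have hj' := h j'
      simp only [z, hσ, if_pos, if_neg hjj', if_neg hjj'.symm, mul_one, one_mul] at hj hj'
      exact ⟨hlt.mp hj, hlt.mp hj'⟩
    · rintro ⟨hia, hib⟩ m
      simp only [z, hσ]
      split_ifs with h h' h'
      · exact absurd (h.symm.trans h') hjj'
      · simpa [h] using hlt.mpr hia
      · simpa [h'] using hlt.mpr hib
      · simpa using Fin.val_div_lt_one _
  set count := #{i : Fin n | (σ j i : ℕ) < a ∧ (σ j' i : ℕ) < b}
  have hcard : Nat.card {i : Fin n // ∀ m, x i m < z m} = count := by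
    rw [Nat.card_congr (Equiv.subtypeEquivRight hbox), Nat.card_eq_fintype_card,
      Fintype.card_subtype]
  have := hnnld z hz
  rw [hprod, hcard, div_mul_div_comm, div_le_div_iff₀ (by positivity) hnR] at this
  have : a * b * n ≤ n * count * n := by
    rw [mul_comm n, mul_assoc count]; exact_mod_cast this
  exact Nat.le_of_mul_le_mul_right this hn

lemma graphNNLD_symm_trans (hσ : ∀ j i, x i j = (σ j i : ℕ) / n)
    (hnnld : ∀ z : Fin d → ℝ, (∀ j, z j ∈ Set.Icc (0:ℝ) 1) →
      ∏ j, z j ≤ (Nat.card {i : Fin n // ∀ j, x i j < z j} : ℝ) / n)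
    {j j' : Fin d} (hjj' : j ≠ j') : GraphNNLD ((σ j).symm.trans (σ j')) := by
  intro a b ha hb
  convert mul_le_card_box_of_nnld hσ hnnld hjj' ha hb using 2
  exact card_equiv (σ j).symm fun k => by
    rw [mem_filter, mem_filter]; simp

end PointSet

theorem stmt8_general (d n : ℕ) (x : Fin n → Fin d → ℝ)
    (hreg : ∀ j, ∃ σ : Equiv.Perm (Fin n), ∀ i, x i j = (σ i : ℕ) / n)
    (hgroup : ∀ i i', ∃ k, ∀ j, x k j = Int.fract (x i j + x i' j))
    (hnnld : ∀ z : Fin d → ℝ, (∀ j, z j ∈ Set.Icc (0:ℝ) 1) →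
      ∏ j, z j ≤ (Nat.card {i : Fin n // ∀ j, x i j < z j} : ℝ) / n) :
    Set.range x = Set.range (fun k : Fin n => fun _ : Fin d => (k : ℝ) / n) := by
  choose σ hσ using hreg
  have hadd := exists_forall_perm_apply_eq_add hσ hgroup
  have hσ_eq : ∀ j j', σ j = σ j' := by
    intro j j'
    rcases eq_or_ne j j' with rfl | hjj'
    · rfl
    have hid := (graphNNLD_symm_trans hσ hnnld hjj').eq_id (Equiv.injective _)
      (symm_trans_map_add hadd j j')
    exact Equiv.ext fun i => by simpa using (congrFun hid (σ j i)).symm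
  obtain ⟨τ, hτ⟩ : ∃ τ : Equiv.Perm (Fin n), ∀ i j, x i j = (τ i : ℕ) / n := by
    rcases isEmpty_or_nonempty (Fin d) with _ | ⟨⟨j₀⟩⟩
    · exact ⟨1, fun _ j => isEmptyElim j⟩
    · exact ⟨σ j₀, fun i j => by rw [hσ, hσ_eq j j₀]⟩
  have hx : x = (fun k : Fin n => fun _ : Fin d => (k : ℝ) / n) ∘ τ := funext₂ hτ
  rw [hx, EquivLike.range_comp]

/-- The only projection regular point set of `n` points in `[0,1)^d` that is closed under
coordinatewise addition modulo 1 and has the NNLD property is the diagonal set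
`{0, (1/n)·1, …, ((n-1)/n)·1}`. -/
theorem stmt8 (d n : ℕ) (hn : 0 < n) (x : Fin n → Fin d → ℝ)
    (hx : ∀ i j, x i j ∈ Set.Ico (0:ℝ) 1)
    (hreg : ∀ j, ∃ σ : Equiv.Perm (Fin n), ∀ i, x i j = (σ i : ℕ) / n)
    (hgroup : ∀ i i', ∃ k, ∀ j, x k j = Int.fract (x i j + x i' j))
    (hnnld : ∀ z : Fin d → ℝ, (∀ j, z j ∈ Set.Icc (0:ℝ) 1) →
      ∏ j, z j ≤ (Nat.card {i : Fin n // ∀ j, x i j < z j} : ℝ) / n) :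
    Set.range x = Set.range (fun k : Fin n => fun _ : Fin d => (k : ℝ) / n) :=
  stmt8_general d n x hreg hgroup hnnld
end

section
/- Any (t,m,d)-net in base b has at most b^{t+⌈(m−t)/d⌉} points on the main diagonal {(x,x,…,x) : x ∈ [0,1)}. -/
/-!
Put `q = ⌈(m - t)/d⌉` and write `m - t = ∑ k_j` with every `k_j ≤ q`. If the common coordinate
`y` of a diagonal point lies in the `b`-adic interval `[n/b^q, (n+1)/b^q)`, then in each coordinate
`j` it lies in the `b`-adic interval of length `b^(-k_j)` containing that one, so the point lies in
an elementary box of volume `b^(t-m)`, which contains at most `b^t` points of the net. There are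
`b^q` choices of `n`.
-/

open Set
open scoped Finset

lemma sum_range_min_sub_mul (q s n : ℕ) :
    ∑ j ∈ Finset.range n, min q (s - q * j) = min s (q * n) := by
  induction n with
  | zero => simp
  | succ n ih =>
    rw [Finset.sum_range_succ, ih, mul_add_one]
    omega

lemma exists_le_sum_eq_of_le_mul {d q s : ℕ} (h : s ≤ q * d) :
    ∃ k : Fin d → ℕ, (∀ j, k j ≤ q) ∧ ∑ j, k j = s := by
  refine ⟨fun j ↦ min q (s - q * j), fun j ↦ min_le_left _ _, ?_⟩
  rw [Fin.sum_univ_eq_sum_range (fun j ↦ min q (s - q * j)), sum_range_min_sub_mul]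
  exact min_eq_left h

lemma le_add_sub_one_div_mul {d : ℕ} (hd : 0 < d) (s : ℕ) : s ≤ (s + d - 1) / d * d := by
  have := Nat.lt_div_mul_add (a := s + d - 1) hd
  omega

lemma Ico_div_mul_subset_Ico_natDiv {A c : ℕ} (hc : 0 < c) {B : ℝ} (hB : 0 < B) :
    Ico (A / (B * c)) ((A + 1) / (B * c)) ⊆ Ico (((A / c : ℕ) : ℝ) / B) (((A / c : ℕ) + 1) / B) := by
  have hc' : (0 : ℝ) < c := by exact_mod_cast hc
  have hlo : ((A / c : ℕ) : ℝ) * c ≤ A := by exact_mod_cast Nat.div_mul_le_self A c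
  have hhi : (A : ℝ) + 1 ≤ (((A / c : ℕ) : ℝ) + 1) * c := by
    have : A + 1 ≤ (A / c + 1) * c := by
      rw [add_one_mul]; exact Nat.lt_div_mul_add hc
    exact_mod_cast this
  apply Ico_subset_Ico
  · rw [← mul_div_mul_right _ B hc'.ne']
    exact div_le_div_of_nonneg_right hlo (by positivity)
  · rw [← mul_div_mul_right (((A / c : ℕ) : ℝ) + 1) B hc'.ne']
    exact div_le_div_of_nonneg_right hhi (by positivity)

lemma mem_Ico_floor_mul_div {y B : ℝ} (hy : 0 ≤ y) (hB : 0 < B) :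
    y ∈ Ico (⌊y * B⌋₊ / B) ((⌊y * B⌋₊ + 1) / B) := by
  constructor
  · rw [div_le_iff₀ hB]
    exact Nat.floor_le (by positivity)
  · rw [lt_div_iff₀ hB]
    exact Nat.lt_floor_add_one _

lemma floor_mul_natCast_lt {y : ℝ} (hy : y ∈ Ico 0 1) {n : ℕ} (hn : 0 < n) :
    ⌊y * n⌋₊ < n := by
  rw [Nat.floor_lt (mul_nonneg hy.1 n.cast_nonneg)]
  exact mul_lt_of_lt_one_left (by exact_mod_cast hn) hy.2

lemma mem_Ico_natDiv_floor_mul_pow {b k q : ℕ} (hb : 0 < b) (hkq : k ≤ q) {y : ℝ} (hy : 0 ≤ y) :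
    y ∈ Ico (((⌊y * (b : ℝ) ^ q⌋₊ / b ^ (q - k) : ℕ) : ℝ) / (b : ℝ) ^ k)
      (((⌊y * (b : ℝ) ^ q⌋₊ / b ^ (q - k) : ℕ) + 1) / (b : ℝ) ^ k) := by
  have hbR : (0 : ℝ) < b := by exact_mod_cast hb
  have hsplit : (b : ℝ) ^ q = (b : ℝ) ^ k * ((b ^ (q - k) : ℕ) : ℝ) := by
    rw [Nat.cast_pow, ← pow_add, Nat.add_sub_cancel' hkq]
  have hy' := mem_Ico_floor_mul_div hy (pow_pos hbR q)
  rw [hsplit] at hy' ⊢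
  exact Ico_div_mul_subset_Ico_natDiv (pow_pos hb _) (pow_pos hbR k) hy'

lemma card_diagonal_le_mul {ι : Type*} [Fintype ι] {b d q N : ℕ} (hb : 0 < b) (hd : 0 < d)
    (x : ι → Fin d → ℝ) (hx : ∀ i j, x i j ∈ Ico 0 1) (k : Fin d → ℕ) (hkq : ∀ j, k j ≤ q)
    (hbox : ∀ a : Fin d → ℕ, (∀ j, a j < b ^ k j) →
      Nat.card {i // ∀ j, x i j ∈ Ico ((a j : ℝ) / (b : ℝ) ^ k j) (((a j : ℝ) + 1) / (b : ℝ) ^ k j)}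
        ≤ N) :
    Nat.card {i // ∀ j j', x i j = x i j'} ≤ b ^ q * N := by
  classical
  let j₀ : Fin d := ⟨0, hd⟩
  let digit (i : ι) : ℕ := ⌊x i j₀ * (b : ℝ) ^ q⌋₊
  have hdigit : ∀ i, digit i ∈ Finset.range (b ^ q) := fun i ↦ by
    simpa [digit] using floor_mul_natCast_lt (hx i j₀) (pow_pos hb q)
  have hfiber : ∀ n ∈ Finset.range (b ^ q),
      #{i ∈ ({i | ∀ j j', x i j = x i j'} : Finset ι) | digit i = n} ≤ N := by
    intro n hn
    let a (j : Fin d) : ℕ := n / b ^ (q - k j)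
    have ha : ∀ j, a j < b ^ k j := fun j ↦ by
      rw [Nat.div_lt_iff_lt_mul (pow_pos hb _), ← pow_add, Nat.add_sub_cancel' (hkq j)]
      exact Finset.mem_range.mp hn
    refine le_trans ?_ (hbox a ha)
    rw [Nat.card_eq_fintype_card, Fintype.card_subtype]
    refine Finset.card_le_card fun i hi ↦ ?_
    simp only [Finset.mem_filter, Finset.mem_univ, true_and] at hi ⊢
    obtain ⟨hdiag, rfl⟩ := hi
    intro j
    rw [hdiag j j₀]
    exact mem_Ico_natDiv_floor_mul_pow hb (hkq j) (hx i j₀).1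
  rw [Nat.card_eq_fintype_card, Fintype.card_subtype]
  calc _ ≤ N * #(Finset.range (b ^ q)) :=
        Finset.card_le_mul_card_image_of_maps_to (fun i _ ↦ hdigit i) N hfiber
    _ = b ^ q * N := by rw [Finset.card_range, mul_comm]

theorem stmt9_general (b d m t : ℕ) (hb : 2 ≤ b) (hd : 1 ≤ d)
    (x : Fin (b ^ m) → Fin d → ℝ) (hx : ∀ i j, x i j ∈ Set.Ico (0:ℝ) 1)
    (hnet : ∀ k a : Fin d → ℕ, (∀ j, a j < b ^ k j) → (∑ j, k j) ≤ m - t →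
      Nat.card {i : Fin (b ^ m) // ∀ j,
        x i j ∈ Set.Ico ((a j : ℝ) / (b : ℝ) ^ k j) (((a j : ℝ) + 1) / (b : ℝ) ^ k j)} =
        b ^ (m - ∑ j, k j)) :
    Nat.card {i : Fin (b ^ m) // ∀ j j', x i j = x i j'} ≤ b ^ (t + (m - t + d - 1) / d) := by
  have hb₀ : 0 < b := by omega
  obtain ⟨k, hkq, hk⟩ := exists_le_sum_eq_of_le_mul (le_add_sub_one_div_mul hd (m - t))
  have hbox : ∀ a : Fin d → ℕ, (∀ j, a j < b ^ k j) →
      Nat.card {i // ∀ j, x i j ∈ Ico ((a j : ℝ) / (b : ℝ) ^ k j) (((a j : ℝ) + 1) / (b : ℝ) ^ k j)}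
        ≤ b ^ t := fun a ha ↦ by
    rw [hnet k a ha hk.le, hk]
    exact Nat.pow_le_pow_right hb₀ (by omega)
  rw [pow_add, mul_comm]
  exact card_diagonal_le_mul hb₀ hd x hx k hkq hbox

/-- Any `(t,m,d)`-net in base `b` has at most `b^(t + ⌈(m-t)/d⌉)` points on the main
diagonal of `[0,1)^d`. -/
theorem stmt9 (b d m t : ℕ) (hb : 2 ≤ b) (hd : 1 ≤ d) (ht : t ≤ m)
    (x : Fin (b ^ m) → Fin d → ℝ) (hx : ∀ i j, x i j ∈ Set.Ico (0:ℝ) 1)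
    (hnet : ∀ k a : Fin d → ℕ, (∀ j, a j < b ^ k j) → (∑ j, k j) ≤ m - t →
      Nat.card {i : Fin (b ^ m) // ∀ j,
        x i j ∈ Set.Ico ((a j : ℝ) / (b : ℝ) ^ k j) (((a j : ℝ) + 1) / (b : ℝ) ^ k j)} =
        b ^ (m - ∑ j, k j)) :
    Nat.card {i : Fin (b ^ m) // ∀ j j', x i j = x i j'} ≤ b ^ (t + (m - t + d - 1) / d) :=
  stmt9_general b d m t hb hd x hx hnet
end

section
/- If x_0,…,x_{n_1−1} ∈ [0,1]^{d_1} and x̃_0,…,x̃_{n_2−1} ∈ [0,1]^{d_2} are both NNLD point sets, then their Cartesian product, the N = n_1·n_2 points z_{(i,i')} = (x_i, x̃_{i'}) ∈ [0,1]^{d_1+d_2}, is an NNLD point set. The analogous statement holds with NNLD replaced by NPLD. -/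
/-- A finite point set (indexed by `α`) in `[0,1]^ι` has non-negative local discrepancy. -/
def IsNNLD {α ι : Type*} [Fintype α] [Fintype ι] (x : α → ι → ℝ) : Prop :=
  ∀ z : ι → ℝ, (∀ j, z j ∈ Set.Icc (0:ℝ) 1) →
    ∏ j, z j ≤ (Nat.card {i : α // ∀ j, x i j < z j} : ℝ) / (Fintype.card α)

/-- A finite point set (indexed by `α`) in `[0,1]^ι` has non-positive local discrepancy. -/
def IsNPLD {α ι : Type*} [Fintype α] [Fintype ι] (x : α → ι → ℝ) : Prop :=
  ∀ z : ι → ℝ, (∀ j, z j ∈ Set.Icc (0:ℝ) 1) →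
    (Nat.card {i : α // ∀ j, x i j < z j} : ℝ) / (Fintype.card α) ≤ ∏ j, z j

lemma card_prod_aux {d₁ d₂ n₁ n₂ : ℕ}
    (x : Fin n₁ → Fin d₁ → ℝ) (y : Fin n₂ → Fin d₂ → ℝ) (z : Fin d₁ ⊕ Fin d₂ → ℝ) :
    Nat.card {p : Fin n₁ × Fin n₂ // ∀ j, Sum.elim (x p.1) (y p.2) j < z j}
      = Nat.card {i : Fin n₁ // ∀ j, x i j < z (Sum.inl j)} *
        Nat.card {i : Fin n₂ // ∀ j, y i j < z (Sum.inr j)} := by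
  rw [← Nat.card_prod]
  apply Nat.card_congr
  exact (Equiv.subtypeEquivRight (fun p => by simp [Sum.forall])).trans
    (Equiv.subtypeProdEquivProd)

/-- Cartesian products of NNLD point sets are NNLD, and likewise for NPLD. -/
theorem stmt10 (d₁ d₂ n₁ n₂ : ℕ) (hn₁ : 0 < n₁) (hn₂ : 0 < n₂)
    (x : Fin n₁ → Fin d₁ → ℝ) (y : Fin n₂ → Fin d₂ → ℝ)
    (hx : ∀ i j, x i j ∈ Set.Icc (0:ℝ) 1) (hy : ∀ i j, y i j ∈ Set.Icc (0:ℝ) 1) :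
    (IsNNLD x → IsNNLD y →
      IsNNLD (fun p : Fin n₁ × Fin n₂ => Sum.elim (x p.1) (y p.2))) ∧
    (IsNPLD x → IsNPLD y →
      IsNPLD (fun p : Fin n₁ × Fin n₂ => Sum.elim (x p.1) (y p.2))) := by
  have key : ∀ z : Fin d₁ ⊕ Fin d₂ → ℝ,
      (Nat.card {p : Fin n₁ × Fin n₂ // ∀ j, Sum.elim (x p.1) (y p.2) j < z j} : ℝ) /
        (Fintype.card (Fin n₁ × Fin n₂)) =
      ((Nat.card {i : Fin n₁ // ∀ j, x i j < z (Sum.inl j)} : ℝ) / n₁) *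
        ((Nat.card {i : Fin n₂ // ∀ j, y i j < z (Sum.inr j)} : ℝ) / n₂) := by
    intro z
    rw [card_prod_aux x y z]
    push_cast
    rw [Fintype.card_prod, Fintype.card_fin, Fintype.card_fin]
    push_cast
    rw [div_mul_div_comm]
  constructor
  · intro h1 h2 z hz
    rw [key z, Fintype.prod_sum_type]
    have ha := h1 (fun j => z (Sum.inl j)) (fun j => hz _)
    have hb := h2 (fun j => z (Sum.inr j)) (fun j => hz _)
    rw [Fintype.card_fin] at ha hb
    apply mul_le_mul ha hb (Finset.prod_nonneg fun j _ => (hz _).1)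
    positivity
  · intro h1 h2 z hz
    rw [key z, Fintype.prod_sum_type]
    have ha := h1 (fun j => z (Sum.inl j)) (fun j => hz _)
    have hb := h2 (fun j => z (Sum.inr j)) (fun j => hz _)
    rw [Fintype.card_fin] at ha hb
    have h1' : (∏ j, z (Sum.inl j)) ≤ 1 :=
      Finset.prod_le_one (fun j _ => (hz _).1) (fun j _ => (hz _).2)
    apply mul_le_mul ha hb (by positivity)
    exact Finset.prod_nonneg fun j _ => (hz _).1
end

section
/- Let b ≥ 2, m ≥ 1, d ≥ 2, n = b^m, and let π_1,…,π_d be permutations of {1,…,m}. For 0 ≤ i < n write i = ∑_{k=1}^m a_{i,k} b^{k−1} with digits a_{i,k} ∈ {0,…,b−1}, and define x_{ij} = 1/n + ∑_{k=1}^m b^{−k} a_{i,π_j(k)}. Then for every z ∈ [0,1]^d, (1/n)·#{i : x_{ij} > 1−z_j for all j = 1,…,d} ≥ ∏_{j=1}^d z_j. -/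
/-!
Identify the index `i` with its base-`b` digit vector, ordered coordinatewise; this is a finite
distributive lattice. Each constraint `x_{ij} > 1 - z_j` cuts out an up-set of digit vectors, so by
Harris' inequality the proportion of vectors satisfying all constraints is at least the product of
the proportions for the single constraints. For a fixed `j`, permuting and reversing the digits
turns `x_{ij}` into `(i' + 1) / n` with `i'` running over `0, …, n - 1`, so the `j`-th constraint
holds for at least `n z_j` indices.
-/

open Finset
open scoped FinsetFamily

section Harris

variable {α : Type*} [DistribLattice α] [Fintype α]

-- Harris' inequality: Daykin's inequality together with `s ⊻ t ⊆ s ∩ t` for up-sets.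
lemma card_mul_card_le_card_mul_card_inter [DecidableEq α] {s t : Finset α}
    (hs : IsUpperSet (s : Set α)) (ht : IsUpperSet (t : Set α)) :
    #s * #t ≤ Fintype.card α * #(s ∩ t) := by
  calc #s * #t ≤ #(s ⊼ t) * #(s ⊻ t) := le_card_infs_mul_card_sups s t
    _ ≤ Fintype.card α * #(s ∩ t) := by
      gcongr
      · exact card_le_univ _
      · intro c hc
        obtain ⟨a, ha, a', ha', rfl⟩ := mem_sups.1 hc
        exact mem_inter.2 ⟨hs le_sup_left ha, ht le_sup_right ha'⟩

lemma isUpperSet_filter_univ {p : α → Prop} [DecidablePred p] (hp : Monotone p) :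
    IsUpperSet (({a | p a} : Finset α) : Set α) := by
  rw [coe_filter_univ]
  exact isUpperSet_setOfPred.2 hp

lemma card_mul_prod_card_filter_le [DecidableEq α] {ι : Type*} (P : ι → α → Prop)
    [∀ i, DecidablePred (P i)] (hP : ∀ i, Monotone (P i)) (s : Finset ι) :
    Fintype.card α * ∏ i ∈ s, #{a | P i a} ≤
      Fintype.card α ^ #s * #{a | ∀ i ∈ s, P i a} := by
  induction s using Finset.cons_induction with
  | empty => simp
  | cons i s hi ih =>
    have hinter : ({a | P i a} : Finset α) ∩ ({a | ∀ j ∈ s, P j a} : Finset α) =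
        ({a | ∀ j ∈ cons i s hi, P j a} : Finset α) := by
      ext a
      simp
    have hmono : Monotone fun a => ∀ j ∈ s, P j a :=
      fun a a' h ha j hj => hP j h (ha j hj)
    calc Fintype.card α * ∏ j ∈ cons i s hi, #{a | P j a}
        = #{a | P i a} * (Fintype.card α * ∏ j ∈ s, #{a | P j a}) := by
          rw [prod_cons]; ring
      _ ≤ #{a | P i a} * (Fintype.card α ^ #s * #{a | ∀ j ∈ s, P j a}) := by gcongr
      _ = Fintype.card α ^ #s * (#{a | P i a} * #{a | ∀ j ∈ s, P j a}) := by ring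
      _ ≤ Fintype.card α ^ #s * (Fintype.card α * #{a | ∀ j ∈ cons i s hi, P j a}) := by
          rw [← hinter]
          exact Nat.mul_le_mul_left _ <| card_mul_card_le_card_mul_card_inter
            (isUpperSet_filter_univ (hP i)) (isUpperSet_filter_univ hmono)
      _ = Fintype.card α ^ #(cons i s hi) * #{a | ∀ j ∈ cons i s hi, P j a} := by
          rw [card_cons, pow_succ]; ring

lemma prod_le_card_filter_forall_div [DecidableEq α] [Nonempty α] {ι : Type*} [Fintype ι]
    (P : ι → α → Prop) [∀ i, DecidablePred (P i)] (hP : ∀ i, Monotone (P i))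
    (z : ι → ℝ) (hz₀ : ∀ i, 0 ≤ z i)
    (hz : ∀ i, Fintype.card α * z i ≤ #{a | P i a}) :
    ∏ i, z i ≤ #{a | ∀ i, P i a} / Fintype.card α := by
  have harris := card_mul_prod_card_filter_le P hP univ
  simp only [card_univ, mem_univ, true_implies] at harris
  have hN : (0 : ℝ) < Fintype.card α := by positivity
  rw [le_div_iff₀ hN]
  refine le_of_mul_le_mul_left ?_ (pow_pos hN (Fintype.card ι))
  calc (Fintype.card α : ℝ) ^ Fintype.card ι * ((∏ i, z i) * Fintype.card α)
      = Fintype.card α * ∏ i, (Fintype.card α * z i) := by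
        rw [prod_mul_distrib, prod_const, card_univ]; ring
    _ ≤ Fintype.card α * ∏ i, (#{a | P i a} : ℝ) :=
        mul_le_mul_of_nonneg_left
          (prod_le_prod (fun i _ => mul_nonneg hN.le (hz₀ i)) fun i _ => hz i) hN.le
    _ ≤ (Fintype.card α : ℝ) ^ Fintype.card ι * #{a | ∀ i, P i a} := by
        exact_mod_cast harris

end Harris

lemma mul_le_card_filter_sub_lt (n : ℕ) {t : ℝ} (ht : t ≤ 1) :
    n * t ≤ #{i : Fin n | 1 - t < 1 / n + ((i : ℕ) : ℝ) / n} := by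
  rcases Nat.eq_zero_or_pos n with rfl | hn
  · simp
  have hnR : (0 : ℝ) < n := by exact_mod_cast hn
  have hrev : #{i : Fin n | 1 - t < 1 / n + ((i : ℕ) : ℝ) / n} =
      #{k : Fin n | (k : ℕ) < ⌈n * t⌉₊} := by
    refine card_equiv Fin.revPerm fun k => ?_
    have hk : ((Fin.rev k : ℕ) : ℝ) = n - 1 - k := by
      rw [Fin.val_rev, Nat.cast_sub (by omega)]; push_cast; ring
    simp only [mem_filter, mem_univ, true_and, Fin.revPerm_apply, hk, Nat.lt_ceil]
    rw [← add_div, lt_div_iff₀ hnR]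
    constructor <;> intro h <;> linarith
  rw [hrev, Fin.card_filter_val_lt, Nat.cast_min]
  exact le_min (by nlinarith) (Nat.le_ceil _)

noncomputable def digitFraction (b : ℕ) {m : ℕ} (a : Fin m → Fin b) : ℝ :=
  ∑ k : Fin m, ((a k : ℕ) : ℝ) * (b : ℝ)⁻¹ ^ ((k : ℕ) + 1)

lemma digitFraction_mono {b m : ℕ} : Monotone (digitFraction b (m := m)) := fun a a' h =>
  sum_le_sum fun k _ => by gcongr; exact h k

lemma digitFraction_eq_div {b m : ℕ} (hb : b ≠ 0) (a : Fin m → Fin b) :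
    digitFraction b a = (finFunctionFinEquiv (a ∘ Fin.rev) : ℕ) / (b : ℝ) ^ m := by
  have hbR : (b : ℝ) ≠ 0 := by exact_mod_cast hb
  have hterm (k : Fin m) :
      (b : ℝ)⁻¹ ^ ((k : ℕ) + 1) = (b : ℝ) ^ (Fin.rev k : ℕ) / (b : ℝ) ^ m := by
    rw [Fin.val_rev, pow_sub₀ _ hbR (by omega), inv_pow]
    field_simp
  rw [digitFraction, finFunctionFinEquiv_apply, Nat.cast_sum, sum_div]
  refine Fintype.sum_equiv Fin.revPerm _ _ fun k => ?_
  simp only [hterm, Fin.revPerm_apply, Function.comp_apply, Fin.rev_rev]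
  push_cast
  ring

lemma finFunctionFinEquiv_div_pow_mod {b m : ℕ} (a : Fin m → Fin b) (k : Fin m) :
    (finFunctionFinEquiv a : ℕ) / b ^ (k : ℕ) % b = a k := by
  conv_rhs => rw [← finFunctionFinEquiv.symm_apply_apply a]
  rfl

lemma pow_mul_le_card_filter_digitFraction {b m : ℕ} (hb : b ≠ 0) (σ : Equiv.Perm (Fin m))
    {t : ℝ} (ht : t ≤ 1) :
    (b : ℝ) ^ m * t ≤
      #{a : Fin m → Fin b | 1 - t < 1 / (b : ℝ) ^ m + digitFraction b (a ∘ σ)} := by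
  have hcount : #{a : Fin m → Fin b | 1 - t < 1 / (b : ℝ) ^ m + digitFraction b (a ∘ σ)} =
      #{i : Fin (b ^ m) |
        1 - t < 1 / ((b ^ m : ℕ) : ℝ) + ((i : ℕ) : ℝ) / ((b ^ m : ℕ) : ℝ)} :=
    card_equiv ((Equiv.arrowCongr (Fin.revPerm.trans σ).symm (Equiv.refl _)).trans
      finFunctionFinEquiv) fun a => by
        simp [digitFraction_eq_div hb]
  rw [hcount]
  exact_mod_cast mul_le_card_filter_sub_lt (b ^ m) ht

theorem stmt12_general (b m d : ℕ) (hb : 2 ≤ b)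
    (π : Fin d → Equiv.Perm (Fin m))
    (z : Fin d → ℝ) (hz : ∀ j, z j ∈ Set.Icc (0:ℝ) 1) :
    ∏ j, z j ≤ (Nat.card {i : Fin (b ^ m) // ∀ j,
        1 - z j < 1 / (b ^ m : ℝ) +
          ∑ k : Fin m, (((i : ℕ) / b ^ ((π j k : ℕ)) % b : ℕ) : ℝ) * ((b : ℝ))⁻¹ ^ ((k : ℕ) + 1)} : ℝ)
      / (b ^ m : ℝ) := by
  have hb₀ : b ≠ 0 := by omega
  have : NeZero b := ⟨hb₀⟩
  have hn : ((Fintype.card (Fin m → Fin b) : ℕ) : ℝ) = (b : ℝ) ^ m := by simp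
  have key := prod_le_card_filter_forall_div
    (fun j (a : Fin m → Fin b) => 1 - z j < 1 / (b : ℝ) ^ m + digitFraction b (a ∘ π j))
    (fun j _ _ h ha =>
      ha.trans_le (add_le_add_right (digitFraction_mono fun k => Pi.le_def.mp h (π j k)) _))
    z (fun j => (hz j).1)
    (fun j => by rw [hn]; exact pow_mul_le_card_filter_digitFraction hb₀ (π j) (hz j).2)
  rw [hn] at key
  convert key using 3
  rw [Nat.card_eq_fintype_card, Fintype.card_subtype]
  refine (card_equiv finFunctionFinEquiv fun a => ?_).symm
  simp only [mem_filter, mem_univ, true_and, digitFraction, Function.comp_apply,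
    finFunctionFinEquiv_div_pow_mod]

/-- Shifted permutation digital nets oversample upper anchored boxes: with
`x_{ij} = 1/n + ∑_k b^{-k} a_{i,π_j(k)}` (digits of `i` in base `b` permuted by `π_j`),
for every `z ∈ [0,1]^d` the fraction of points with `x_{ij} > 1 - z_j` for all `j` is at
least `∏_j z_j`. -/
theorem stmt12 (b m d : ℕ) (hb : 2 ≤ b) (hm : 1 ≤ m) (hd : 2 ≤ d)
    (π : Fin d → Equiv.Perm (Fin m))
    (z : Fin d → ℝ) (hz : ∀ j, z j ∈ Set.Icc (0:ℝ) 1) :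
    ∏ j, z j ≤ (Nat.card {i : Fin (b ^ m) // ∀ j,
        1 - z j < 1 / (b ^ m : ℝ) +
          ∑ k : Fin m, (((i : ℕ) / b ^ ((π j k : ℕ)) % b : ℕ) : ℝ) * ((b : ℝ))⁻¹ ^ ((k : ℕ) + 1)} : ℝ)
      / (b ^ m : ℝ) :=
  stmt12_general b m d hb π z hz
end

section
/- Let b ≥ 2, m ≥ 1, d ≥ 2, n = b^m, and let x̃_0,…,x̃_{n−1} be the digital net in base b whose generator matrices are permutation matrices; i.e., writing i = ∑_k a_{i,k} b^{k−1}, set x̃_{ij} = ∑_{k=1}^m b^{−k} a_{i,π_j(k)} for permutations π_j of {1,…,m}. Then the reflected shifted points x_{ij} = 1 − (1/n + x̃_{ij}) form an NNLD point set. -/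
/-!
Index the points by their digit vectors `a ∈ {0,…,b-1}^m`, a finite distributive lattice under the
coordinatewise order. In coordinate `j` the point is `t_j(a)/n`, where `a ↦ t_j(a)` is a bijection
onto `{0,…,n-1}` (reverse the digits permuted by `π_j`, then reflect `t ↦ n-1-t`); hence the up-set
`A_j = {a : x_j(a) < z_j}` has at least `n z_j` elements. It is an up-set because `x_j` is antitone
in the digits, so Harris' inequality (the four functions theorem) gives
`∏_j |A_j|/n ≤ |⋂_j A_j|/n`.
-/

open Finset FinsetFamily

section Harris

variable {L : Type*} [DistribLattice L] [Fintype L] [DecidableEq L]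

theorem IsUpperSet.card_mul_card_le_card_mul_card_inter {A B : Finset L}
    (hA : IsUpperSet (A : Set L)) (hB : IsUpperSet (B : Set L)) :
    #A * #B ≤ Fintype.card L * #(A ∩ B) :=
  calc #A * #B ≤ #(A ⊼ B) * #(A ⊻ B) := le_card_infs_mul_card_sups A B
    _ ≤ Fintype.card L * #(A ∩ B) := by
      gcongr
      · exact card_le_univ _
      · intro _ h
        obtain ⟨a, ha, c, hc, rfl⟩ := mem_sups.1 h
        exact mem_inter.2 ⟨hA le_sup_left ha, hB le_sup_right hc⟩

theorem IsUpperSet.prod_card_div_le_card_inf_div [Nonempty L] {ι : Type*} [DecidableEq ι]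
    (s : Finset ι) {A : ι → Finset L} (hA : ∀ i ∈ s, IsUpperSet (A i : Set L)) :
    ∏ i ∈ s, (#(A i) / Fintype.card L : ℝ) ≤ #(s.inf A) / Fintype.card L := by
  have hL : (0 : ℝ) < Fintype.card L := by exact_mod_cast Fintype.card_pos
  induction s using Finset.induction with
  | empty => simp [hL.ne']
  | @insert i s hi ih =>
    have hs : ∀ j ∈ s, IsUpperSet (A j : Set L) := fun j hj => hA j (mem_insert_of_mem hj)
    have hB : IsUpperSet ((s.inf A : Finset L) : Set L) := fun a c hac ha => by
      simp only [mem_coe, mem_inf] at ha ⊢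
      exact fun j hj => hs j hj hac (ha j hj)
    have harris : (#(A i) * #(s.inf A) : ℝ) ≤ Fintype.card L * #(A i ∩ s.inf A) := by
      exact_mod_cast (hA i (mem_insert_self i s)).card_mul_card_le_card_mul_card_inter hB
    rw [prod_insert hi, inf_insert, inf_eq_inter]
    calc (#(A i) / Fintype.card L : ℝ) * ∏ j ∈ s, (#(A j) / Fintype.card L : ℝ)
        ≤ #(A i) / Fintype.card L * (#(s.inf A) / Fintype.card L) := by gcongr; exact ih hs
      _ ≤ #(A i ∩ s.inf A) / Fintype.card L := by
          rw [div_mul_div_comm, div_le_div_iff₀ (by positivity) hL]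
          nlinarith

end Harris

theorem le_card_filter_natCast_lt {n : ℕ} {y : ℝ} (hy : y ≤ n) :
    y ≤ #{t : Fin n | (t : ℝ) < y} := by
  have hfilter :
      ({t | (t : ℝ) < y} : Finset (Fin n)) = ({t | (t : ℕ) < ⌈y⌉₊} : Finset (Fin n)) := by
    ext t
    simp [Nat.lt_ceil]
  rw [hfilter, Fin.card_filter_val_lt, Nat.cast_min]
  exact le_min hy (Nat.le_ceil y)

section DigitalNet

variable {b m : ℕ}

theorem sum_digit_mul_inv_pow_eq (hb : b ≠ 0) (a : Fin m → Fin b) :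
    ∑ k, (a k : ℝ) * (b : ℝ)⁻¹ ^ ((k : ℕ) + 1) =
      (finFunctionFinEquiv (a ∘ Fin.rev) : ℕ) / (b : ℝ) ^ m := by
  rw [finFunctionFinEquiv_apply]
  push_cast
  rw [sum_div]
  refine Fintype.sum_equiv Fin.revPerm _ _ fun k => ?_
  have hpow : (b : ℝ) ^ m = (b : ℝ) ^ (Fin.rev k : ℕ) * (b : ℝ) ^ ((k : ℕ) + 1) := by
    rw [← pow_add, Fin.val_rev]
    congr 1
    omega
  simp only [Fin.revPerm_apply, Function.comp_apply, Fin.rev_rev]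
  rw [hpow, inv_pow]
  field_simp

/-- The point `1 - (1/n + x̃)`, `n = b^m`, of the reflected shifted digital net whose generator
matrix is the permutation matrix of `σ`, at the index with digit vector `a`. -/
noncomputable def reflectedNetPoint (b : ℕ) (σ : Equiv.Perm (Fin m)) (a : Fin m → Fin b) : ℝ :=
  1 - (1 / (b ^ m : ℝ) + ∑ k, (a (σ k) : ℝ) * (b : ℝ)⁻¹ ^ ((k : ℕ) + 1))

/-- `a ↦ n - 1 - ∑ₛ a(σ(rev s)) bˢ`. -/
def reflectedNetIndex (σ : Equiv.Perm (Fin m)) : (Fin m → Fin b) ≃ Fin (b ^ m) :=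
  ((Fin.revPerm.trans σ).symm.arrowCongr (Equiv.refl (Fin b))).trans
    (finFunctionFinEquiv.trans Fin.revPerm)

theorem reflectedNetPoint_eq (hb : b ≠ 0) (σ : Equiv.Perm (Fin m)) (a : Fin m → Fin b) :
    reflectedNetPoint b σ a = (reflectedNetIndex σ a : ℕ) / (b : ℝ) ^ m := by
  have hsum := sum_digit_mul_inv_pow_eq hb (a ∘ σ)
  simp only [Function.comp_apply] at hsum
  set t := finFunctionFinEquiv ((a ∘ σ) ∘ Fin.rev)
  have hindex : (reflectedNetIndex σ a : ℕ) = b ^ m - (t + 1) := by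
    simp [reflectedNetIndex, t, Fin.val_rev, Function.comp_def]
  have ht : (t : ℕ) + 1 ≤ b ^ m := t.is_lt
  rw [reflectedNetPoint, hsum, hindex, Nat.cast_sub ht]
  field_simp
  push_cast
  ring

theorem antitone_reflectedNetPoint (σ : Equiv.Perm (Fin m)) :
    Antitone (reflectedNetPoint b σ) := by
  intro a c hac
  unfold reflectedNetPoint
  gcongr with k
  exact_mod_cast hac (σ k)

theorem le_card_filter_reflectedNetPoint_lt (hb : b ≠ 0) (σ : Equiv.Perm (Fin m)) {z : ℝ}
    (hz : z ≤ 1) : (b : ℝ) ^ m * z ≤ #{a | reflectedNetPoint b σ a < z} := by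
  have hn : (0 : ℝ) < (b : ℝ) ^ m := by positivity
  rw [card_equiv (reflectedNetIndex σ) (t := {t : Fin (b ^ m) | (t : ℝ) < b ^ m * z}) fun a => by
    simp [reflectedNetPoint_eq hb, div_lt_iff₀' hn]]
  exact le_card_filter_natCast_lt (by push_cast; nlinarith)

end DigitalNet

theorem stmt13_general (b m d : ℕ) (hb : 2 ≤ b)
    (π : Fin d → Equiv.Perm (Fin m))
    (x : Fin (b ^ m) → Fin d → ℝ)
    (hxdef : ∀ i j, x i j = 1 - (1 / (b ^ m : ℝ) +
      ∑ k : Fin m, (((i : ℕ) / b ^ ((π j k : ℕ)) % b : ℕ) : ℝ) * ((b : ℝ))⁻¹ ^ ((k : ℕ) + 1))) :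
    ∀ z : Fin d → ℝ, (∀ j, z j ∈ Set.Icc (0:ℝ) 1) →
      ∏ j, z j ≤ (Nat.card {i : Fin (b ^ m) // ∀ j, x i j < z j} : ℝ) / (b ^ m : ℝ) := by
  intro z hz
  have hb0 : b ≠ 0 := by omega
  have : NeZero b := ⟨hb0⟩
  have hdigit (a : Fin m → Fin b) (p : Fin m) :
      (finFunctionFinEquiv a : ℕ) / b ^ (p : ℕ) % b = a p :=
    congrArg Fin.val (congrFun (finFunctionFinEquiv.symm_apply_apply a) p)
  have hx : ∀ a j, x (finFunctionFinEquiv a) j = reflectedNetPoint b (π j) a := fun a j => by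
    simp only [hxdef, reflectedNetPoint, hdigit]
  set A : Fin d → Finset (Fin m → Fin b) := fun j => {a | reflectedNetPoint b (π j) a < z j}
  have hA : ∀ j ∈ univ, IsUpperSet (A j : Set (Fin m → Fin b)) := fun j _ a c hac ha => by
    simp only [A, coe_filter, mem_univ, true_and, Set.mem_ofPred_eq] at ha ⊢
    exact (antitone_reflectedNetPoint (π j) hac).trans_lt ha
  have hcard : #(univ.inf A) = Nat.card {i : Fin (b ^ m) // ∀ j, x i j < z j} := by
    rw [Nat.card_eq_fintype_card, Fintype.card_subtype]
    exact card_equiv finFunctionFinEquiv fun a => by simp [A, hx, mem_inf]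
  have hL : Fintype.card (Fin m → Fin b) = b ^ m := by simp
  calc ∏ j, z j ≤ ∏ j, (#(A j) / Fintype.card (Fin m → Fin b) : ℝ) := by
        refine prod_le_prod (fun j _ => (hz j).1) fun j _ => ?_
        rw [hL, Nat.cast_pow, le_div_iff₀' (by positivity)]
        exact le_card_filter_reflectedNetPoint_lt hb0 (π j) (hz j).2
    _ ≤ _ := IsUpperSet.prod_card_div_le_card_inf_div univ hA
    _ = _ := by rw [hcard, hL, Nat.cast_pow]

/-- If `x̃` is a digital net in base `b` whose generator matrices are permutation matrices,
i.e. `x̃_{ij} = ∑_k b^{-k} a_{i,π_j(k)}`, then the reflected shifted points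
`x_{ij} = 1 - (1/n + x̃_{ij})` form an NNLD point set. -/
theorem stmt13 (b m d : ℕ) (hb : 2 ≤ b) (hm : 1 ≤ m) (hd : 2 ≤ d)
    (π : Fin d → Equiv.Perm (Fin m))
    (x : Fin (b ^ m) → Fin d → ℝ)
    (hxdef : ∀ i j, x i j = 1 - (1 / (b ^ m : ℝ) +
      ∑ k : Fin m, (((i : ℕ) / b ^ ((π j k : ℕ)) % b : ℕ) : ℝ) * ((b : ℝ))⁻¹ ^ ((k : ℕ) + 1))) :
    ∀ z : Fin d → ℝ, (∀ j, z j ∈ Set.Icc (0:ℝ) 1) →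
      ∏ j, z j ≤ (Nat.card {i : Fin (b ^ m) // ∀ j, x i j < z j} : ℝ) / (b ^ m : ℝ) :=
  stmt13_general b m d hb π x hxdef
end

section
/- Let b be a prime, m = ℓd + r with ℓ ∈ ℕ₀ and 0 ≤ r < d, and let V = {v_1,…,v_m} be a linearly independent set in (ℤ_b)^m. If every row of each of the generator matrices C^(1),…,C^(d) ∈ (ℤ_b)^{m×m} belongs to V, then the quality criterion satisfies ρ(𝒞) ≤ 2⌊m/d⌋ + 1. -/
/-!
Only the first `⌊m/d⌋ + 1` rows of each of the `d` matrices are relevant. These are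
`d (⌊m/d⌋ + 1) > m` rows, all taken from the `m` vectors of `V`, so by pigeonhole two of them
coincide. Any `m⃗` with `|m⃗| = ρ ≥ 2⌊m/d⌋ + 2` can be chosen to include both, and then
`𝒞^(m⃗)` has two equal rows and rank `< ρ`.
-/

open Classical in
/-- The quality criterion `ρ(𝒞)` of a collection of generator matrices: the greatest
`ρ ∈ {0,…,m}` such that for every `m⃗ = (m_1,…,m_d)` with `∑_j m_j = ρ`, the matrix
obtained by stacking the first `m_j` rows of each `C^(j)` has rank `ρ` over `ℤ_b`. -/
noncomputable def rhoC (b d m : ℕ) (C : Fin d → Matrix (Fin m) (Fin m) (ZMod b)) : ℕ :=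
  Nat.findGreatest (fun ρ =>
    ∀ mv : Fin d → Fin (m + 1), (∑ j, (mv j : ℕ)) = ρ →
      (Matrix.of fun (p : (j : Fin d) × Fin ((mv j : ℕ))) (s : Fin m) =>
        C p.1 (Fin.castLE (Fin.is_le (mv p.1)) p.2) s).rank = ρ) m

theorem Fintype.exists_ne_map_eq_of_forall_exists_eq {α β ι : Type*} [Fintype α] [Fintype ι]
    {f : α → β} {v : ι → β} (hf : ∀ a, ∃ i, f a = v i) (h : card ι < card α) :
    ∃ x y, x ≠ y ∧ f x = f y := by
  choose g hg using hf
  obtain ⟨x, y, hxy, hgxy⟩ := exists_ne_map_eq_of_card_lt g h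
  exact ⟨x, y, hxy, by rw [hg x, hg y, hgxy]⟩

theorem Matrix.rank_lt_card_height_of_row_eq {R m n : Type*} [CommSemiring R]
    [StrongRankCondition R] [Fintype m] [Fintype n] (A : Matrix m n R) {p q : m} (hpq : p ≠ q)
    (h : A p = A q) : A.rank < Fintype.card m := by
  classical
  let dropRowP : m → {i // i ≠ p} := fun i => if hi : i = p then ⟨q, hpq.symm⟩ else ⟨i, hi⟩
  have hA : A = (A.submatrix Subtype.val id).submatrix dropRowP id := by
    ext i j
    by_cases hi : i = p
    · subst hi; simp [dropRowP, h]
    · simp [dropRowP, hi]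
  calc A.rank = ((A.submatrix Subtype.val id).submatrix dropRowP id).rank := congrArg _ hA
    _ ≤ (A.submatrix Subtype.val id).rank := rank_submatrix_le _ _ _
    _ ≤ Fintype.card {i // i ≠ p} := rank_le_card_height _
    _ < Fintype.card m := Fintype.card_subtype_lt (not_not.2 rfl)

section StackedRows

variable {R : Type*} {d m : ℕ}

/-- The matrix `𝒞^(m⃗)`, with `m⃗` encoded as `mv : Fin d → Fin (m + 1)`. -/
def stackedRows (C : Fin d → Matrix (Fin m) (Fin m) R) (mv : Fin d → Fin (m + 1)) :
    Matrix ((j : Fin d) × Fin (mv j)) (Fin m) R :=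
  Matrix.of fun p s => C p.1 (Fin.castLE (Fin.is_le (mv p.1)) p.2) s

theorem rank_stackedRows_lt_of_row_eq [CommSemiring R] [StrongRankCondition R]
    (C : Fin d → Matrix (Fin m) (Fin m) R) (mv : Fin d → Fin (m + 1))
    {p q : (j : Fin d) × Fin (mv j)} (hpq : p ≠ q) (h : stackedRows C mv p = stackedRows C mv q) :
    (stackedRows C mv).rank < ∑ j, (mv j : ℕ) := by
  simpa using Matrix.rank_lt_card_height_of_row_eq _ hpq h

theorem rank_stackedRows_eq_rhoC {b : ℕ} (C : Fin d → Matrix (Fin m) (Fin m) (ZMod b))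
    (hρ : rhoC b d m C ≠ 0) (mv : Fin d → Fin (m + 1)) (hmv : ∑ j, (mv j : ℕ) = rhoC b d m C) :
    (stackedRows C mv).rank = rhoC b d m C :=
  Nat.findGreatest_of_ne_zero rfl hρ mv hmv

end StackedRows

/-- Put `ρ - n` rows on `x` and `n` rows on `y` (all `ρ` rows on `x` if `x = y`). -/
theorem exists_sum_eq_and_le_of_two_mul_le {d m n ρ : ℕ} (x y : Fin d) (hnρ : 2 * n ≤ ρ)
    (hρm : ρ ≤ m) :
    ∃ mv : Fin d → Fin (m + 1), ∑ j, (mv j : ℕ) = ρ ∧ n ≤ mv x ∧ n ≤ mv y := by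
  classical
  let mvNat : Fin d → ℕ := fun j => (if j = x then ρ - n else 0) + (if j = y then n else 0)
  have hsum : ∑ j, mvNat j = ρ := by
    simp only [mvNat, Finset.sum_add_distrib, Finset.sum_ite_eq', Finset.mem_univ, if_true]
    omega
  refine ⟨fun j => ⟨mvNat j, ?_⟩, hsum, ?_, ?_⟩ <;> · simp only [mvNat]; split_ifs <;> omega

theorem rhoC_lt_of_row_eq {b d m n : ℕ} [Fact b.Prime]
    (C : Fin d → Matrix (Fin m) (Fin m) (ZMod b)) (hn : n ≤ m) {x y : Fin d × Fin n} (hxy : x ≠ y)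
    (h : C x.1 (Fin.castLE hn x.2) = C y.1 (Fin.castLE hn y.2)) :
    rhoC b d m C < 2 * n := by
  by_contra! hρ
  have hρm : rhoC b d m C ≤ m := Nat.findGreatest_le m
  obtain ⟨mv, hmv, hx, hy⟩ := exists_sum_eq_and_le_of_two_mul_le x.1 y.1 hρ hρm
  let p : (j : Fin d) × Fin (mv j) := ⟨x.1, ⟨x.2, by omega⟩⟩
  let q : (j : Fin d) × Fin (mv j) := ⟨y.1, ⟨y.2, by omega⟩⟩
  have hpq : p ≠ q := fun hpq =>
    hxy (Prod.ext (congrArg Sigma.fst hpq) (Fin.ext (congrArg (fun s => (s.2 : ℕ)) hpq)))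
  have hlt := rank_stackedRows_lt_of_row_eq C mv hpq h
  rw [rank_stackedRows_eq_rhoC C (by have := x.2.pos; omega) mv hmv, hmv] at hlt
  exact lt_irrefl _ hlt

theorem stmt15_general (b d m r : ℕ) [Fact (Nat.Prime b)]
    (hr : r < d)
    (v : Fin m → Fin m → ZMod b)
    (C : Fin d → Matrix (Fin m) (Fin m) (ZMod b))
    (hrows : ∀ j k, ∃ l, C j k = v l) :
    rhoC b d m C ≤ 2 * (m / d) + 1 := by
  by_cases hn : m / d + 1 ≤ m
  · have hcard : Fintype.card (Fin m) < Fintype.card (Fin d × Fin (m / d + 1)) := by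
      simpa using Nat.lt_mul_div_succ m (by omega : 0 < d)
    obtain ⟨x, y, hxy, h⟩ := Fintype.exists_ne_map_eq_of_forall_exists_eq
      (f := fun x : Fin d × Fin (m / d + 1) => C x.1 (Fin.castLE hn x.2))
      (fun x => hrows _ _) hcard
    have := rhoC_lt_of_row_eq C hn hxy h
    omega
  · have : rhoC b d m C ≤ m := Nat.findGreatest_le m
    omega

/-- If all rows of the generator matrices `C^(1),…,C^(d)` come from a set of `m` linearly
independent vectors in `ℤ_b^m`, where `m = ℓd + r` with `0 ≤ r < d`, then the quality
criterion satisfies `ρ(𝒞) ≤ 2⌊m/d⌋ + 1`. -/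
theorem stmt15 (b d m ℓ r : ℕ) [Fact (Nat.Prime b)]
    (hm : m = ℓ * d + r) (hr : r < d)
    (v : Fin m → Fin m → ZMod b) (hv : LinearIndependent (ZMod b) v)
    (C : Fin d → Matrix (Fin m) (Fin m) (ZMod b))
    (hrows : ∀ j k, ∃ l, C j k = v l) :
    rhoC b d m C ≤ 2 * (m / d) + 1 :=
  stmt15_general b d m r hr v C hrows
end

section
/- Let b be a prime, m = ℓd + r with ℓ ∈ ℕ and 0 ≤ r < d. If the generator matrices C^(1),…,C^(d) ∈ (ℤ_b)^{m×m} are all permutation matrices, then the smallest t-value of the resulting digital net satisfies t ≥ (d−2)⌊m/d⌋ + r − 1. -/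
/-!
Among the first `ℓ + 1` rows of the `d` permutation matrices there are `d (ℓ + 1) > m` unit
rows, so two of them coincide, and they lie in different matrices `C^(j₁)`, `C^(j₂)`, at
positions `k₁, k₂ ≤ ℓ`. Every `ρ` with `k₁ + k₂ + 2 ≤ ρ ≤ m` is the sum of some `m⃗` with
`m_{j₁} > k₁` and `m_{j₂} > k₂`, and the stacked matrix for `m⃗` then has two equal rows, so
its rank is below `ρ`. Hence `ρ(𝒞) ≤ 2ℓ + 1`, which is the claimed bound for `t = m - ρ(𝒞)`.
-/
theorem Matrix.rank_lt_card_height_of_row_eq_s16 {K ι n : Type*} [Field K] [Fintype ι] [Fintype n]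
    (M : Matrix ι n K) {p q : ι} (hpq : p ≠ q) (h : M p = M q) :
    M.rank < Fintype.card ι := by
  refine (M.rank_le_card_height).lt_of_ne fun hcard => hpq ?_
  have hli : LinearIndependent K M.row := by
    rw [linearIndependent_iff_card_eq_finrank_span, ← hcard, M.rank_eq_finrank_span_row,
      Set.finrank]
  exact hli.injective h

theorem Fintype.exists_ne_apply_eq_of_card_lt_mul {ι α β : Type*} [Fintype ι] [Fintype α]
    [Fintype β] (f : ι → α → β) (hf : ∀ i, Function.Injective (f i))
    (h : Fintype.card β < Fintype.card ι * Fintype.card α) :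
    ∃ i j, i ≠ j ∧ ∃ a b, f i a = f j b := by
  obtain ⟨⟨i, a⟩, ⟨j, b⟩, hne, heq⟩ :=
    Fintype.exists_ne_map_eq_of_card_lt (fun x : ι × α => f x.1 x.2)
      (by rwa [Fintype.card_prod])
  refine ⟨i, j, fun hij => hne ?_, a, b, heq⟩
  subst hij
  exact Prod.ext rfl (hf i heq)

theorem exists_between_sum_eq {ι : Type*} [Fintype ι] {u c : ι → ℕ} (huc : u ≤ c) {n : ℕ}
    (hu : ∑ i, u i ≤ n) (hc : n ≤ ∑ i, c i) :
    ∃ v, u ≤ v ∧ v ≤ c ∧ ∑ i, v i = n := by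
  classical
  induction n, hu using Nat.le_induction with
  | base => exact ⟨u, le_rfl, huc, rfl⟩
  | succ n _ ih =>
    obtain ⟨v, huv, hvc, hv⟩ := ih (by omega)
    obtain ⟨i, hi⟩ : ∃ i, v i < c i := by
      by_contra! hcv
      have := Finset.sum_le_sum fun i (_ : i ∈ Finset.univ) => hcv i
      omega
    refine ⟨v + Pi.single i 1, huv.trans le_self_add, fun j => ?_, ?_⟩
    · rcases eq_or_ne j i with rfl | hji
      · simpa using hi
      · simpa [hji] using hvc j
    · simp [Finset.sum_add_distrib, hv]

section

variable {b d m : ℕ}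

def stackRows {R : Type*} (C : Fin d → Matrix (Fin m) (Fin m) R) (mv : Fin d → Fin (m + 1)) :
    Matrix ((j : Fin d) × Fin (mv j : ℕ)) (Fin m) R :=
  Matrix.of fun p s => C p.1 (Fin.castLE (Fin.is_le (mv p.1)) p.2) s

theorem rank_stackRows_eq_rhoC (C : Fin d → Matrix (Fin m) (Fin m) (ZMod b))
    (hρ : rhoC b d m C ≠ 0) (mv : Fin d → Fin (m + 1)) (hmv : ∑ j, (mv j : ℕ) = rhoC b d m C) :
    (stackRows C mv).rank = rhoC b d m C :=
  Nat.findGreatest_of_ne_zero rfl hρ mv hmv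

theorem rhoC_le_of_row_eq [Fact b.Prime] (C : Fin d → Matrix (Fin m) (Fin m) (ZMod b))
    {j₁ j₂ : Fin d} (hj : j₁ ≠ j₂) {k₁ k₂ : Fin m} (h : C j₁ k₁ = C j₂ k₂) :
    rhoC b d m C ≤ k₁ + k₂ + 1 := by
  by_contra! hlt
  have hρm : rhoC b d m C ≤ m := Nat.findGreatest_le m
  set u : Fin d → ℕ := Pi.single j₁ ((k₁ : ℕ) + 1) + Pi.single j₂ ((k₂ : ℕ) + 1)
  have hu₁ : u j₁ = k₁ + 1 := by simp [u, hj]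
  have hu₂ : u j₂ = k₂ + 1 := by simp [u, hj.symm]
  obtain ⟨v, huv, hvm, hv⟩ := exists_between_sum_eq (c := fun _ => m) (n := rhoC b d m C)
    (u := u) (fun j => by
      rcases eq_or_ne j j₁ with rfl | h₁
      · exact hu₁ ▸ k₁.isLt
      rcases eq_or_ne j j₂ with rfl | h₂
      · exact hu₂ ▸ k₂.isLt
      simp [u, h₁, h₂])
    (by simp [u, Finset.sum_add_distrib]; omega)
    (by simpa using hρm.trans (Nat.le_mul_of_pos_left m (Fin.pos j₁)))
  let mv : Fin d → Fin (m + 1) := fun j => ⟨v j, Nat.lt_succ_of_le (hvm j)⟩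
  have hrank := rank_stackRows_eq_rhoC C (by omega) mv hv
  have hcard : Fintype.card ((j : Fin d) × Fin (mv j : ℕ)) = rhoC b d m C := by
    simpa [mv] using hv
  have hk₁ : (k₁ : ℕ) < v j₁ := hu₁.symm.trans_le (huv j₁)
  have hk₂ : (k₂ : ℕ) < v j₂ := hu₂.symm.trans_le (huv j₂)
  have hrow : stackRows C mv ⟨j₁, k₁, hk₁⟩ = stackRows C mv ⟨j₂, k₂, hk₂⟩ := h
  have := (stackRows C mv).rank_lt_card_height_of_row_eq_s16 (by simp [hj]) hrow
  omega

theorem rhoC_lt_of_perm [Fact b.Prime] (π : Fin d → Equiv.Perm (Fin m))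
    (C : Fin d → Matrix (Fin m) (Fin m) (ZMod b))
    (hperm : ∀ j k s, C j k s = if π j k = s then 1 else 0) {k : ℕ} (hk : m < d * k) :
    rhoC b d m C < 2 * k := by
  by_cases hkm : k ≤ m
  · obtain ⟨j₁, j₂, hj, a₁, a₂, ha⟩ := Fintype.exists_ne_apply_eq_of_card_lt_mul
      (fun j => π j ∘ Fin.castLE hkm)
      (fun j => (π j).injective.comp (Fin.castLE_injective hkm)) (by simpa using hk)
    have hrow : C j₁ (Fin.castLE hkm a₁) = C j₂ (Fin.castLE hkm a₂) := by
      ext s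
      rw [hperm, hperm, show π j₁ _ = π j₂ _ from ha]
    have := rhoC_le_of_row_eq C hj hrow
    simp only [Fin.val_castLE] at this
    omega
  · have : rhoC b d m C ≤ m := Nat.findGreatest_le m
    omega

end

theorem stmt16_general (b d m ℓ r : ℕ) [Fact (Nat.Prime b)]
    (hm : m = ℓ * d + r) (hr : r < d)
    (π : Fin d → Equiv.Perm (Fin m))
    (C : Fin d → Matrix (Fin m) (Fin m) (ZMod b))
    (hperm : ∀ j k s, C j k s = if π j k = s then 1 else 0) :
    ((d : ℤ) - 2) * ((m / d : ℕ) : ℤ) + (r : ℤ) - 1 ≤ (m : ℤ) - (rhoC b d m C : ℤ) := by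
  have hmd : m / d = ℓ := by
    rw [hm, mul_comm, Nat.mul_add_div (by omega), Nat.div_eq_of_lt hr, add_zero]
  have hρ : rhoC b d m C < 2 * (ℓ + 1) := rhoC_lt_of_perm π C hperm (by rw [hm]; nlinarith)
  have hm' : (m : ℤ) = ℓ * d + r := by exact_mod_cast hm
  rw [hmd, hm']
  nlinarith

/-- If the generator matrices `C^(1),…,C^(d)` are all permutation matrices and
`m = ℓd + r` with `ℓ ≥ 1`, `0 ≤ r < d`, then the exact `t`-value `t(𝒞) = m − ρ(𝒞)` of the
resulting digital net satisfies `t(𝒞) ≥ (d−2)⌊m/d⌋ + r − 1`. -/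
theorem stmt16 (b d m ℓ r : ℕ) [Fact (Nat.Prime b)]
    (hl : 1 ≤ ℓ) (hm : m = ℓ * d + r) (hr : r < d)
    (π : Fin d → Equiv.Perm (Fin m))
    (C : Fin d → Matrix (Fin m) (Fin m) (ZMod b))
    (hperm : ∀ j k s, C j k s = if π j k = s then 1 else 0) :
    ((d : ℤ) - 2) * ((m / d : ℕ) : ℤ) + (r : ℤ) - 1 ≤ (m : ℤ) - (rhoC b d m C : ℤ) :=
  stmt16_general b d m ℓ r hm hr π C hperm
end

section
/- For integers m ≥ d ≥ 1 and b ≥ 2, let n = b^m and define for 0 ≤ i < n the points x_i = (i/n, ib/n, ib²/n, …, ib^{d−1}/n) mod 1 (coordinatewise fractional part). Then the points x_0,…,x_{n−1} form an NNLD point set. -/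
/-!
The `j`-th coordinate of `x_i` is `(i mod Q_j) / Q_j` with `Q_j = b^(m-j)`, so `x_i` lies in the
box `∏ [0, z_j)` iff `i mod Q_j < C_j := ⌈z_j Q_j⌉` for every `j`. The moduli form a divisibility
chain `Q_{d-1} ∣ ⋯ ∣ Q_0`, so the conditions with `j ≥ 1` are `Q_0`-periodic: among `s < t`, the
count splits into `⌊t / Q_0⌋` full periods, each contributing the count below `C_0`, plus a
remainder. Induction on `d` then gives `t ∏ C_j ≤ count · ∏ Q_j`, and `t = b^m`, `C_j ≥ z_j Q_j`
turn this into the NNLD inequality.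
-/

open Finset Function

namespace Nat

open Count

variable {p : ℕ → Prop} [DecidablePred p] {a : ℕ}

theorem count_add_of_periodic (hp : Periodic p a) (t : ℕ) :
    count p (a + t) = count p a + count p t := by
  rw [count_add]
  congr 1
  simp only [add_comm a, show ∀ k, p (k + a) = p k from hp]

theorem count_mul_add_of_periodic (hp : Periodic p a) (q r : ℕ) :
    count p (q * a + r) = q * count p a + count p r := by
  induction q with
  | zero => simp
  | succ q ih => rw [add_mul, one_mul, add_right_comm, add_comm, count_add_of_periodic hp, ih]; ring

theorem count_mod_lt_and_of_periodic (hp : Periodic p a) (ha : 0 < a) {c : ℕ} (hc : c ≤ a)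
    (t : ℕ) :
    count (fun s ↦ s % a < c ∧ p s) t = t / a * count p c + count p (min (t % a) c) := by
  have hper : Periodic (fun s ↦ s % a < c ∧ p s) a := fun s ↦ by simp only [add_mod_right, hp s]
  have hslice : ∀ r ≤ a, count (fun s ↦ s % a < c ∧ p s) r = count p (min r c) := by
    intro r hr
    simp only [count_eq_card_filter_range]
    congr 1
    ext s
    simp only [mem_filter, mem_range, lt_min_iff]
    constructor
    · rintro ⟨hs, hsc, hps⟩
      rw [mod_eq_of_lt (by omega)] at hsc
      exact ⟨⟨hs, hsc⟩, hps⟩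
    · rintro ⟨⟨hs, hsc⟩, hps⟩
      exact ⟨hs, by rwa [mod_eq_of_lt (by omega)], hps⟩
  conv_lhs => rw [← div_add_mod' t a]
  rw [count_mul_add_of_periodic hper, hslice a le_rfl, hslice _ (mod_lt t ha).le, min_eq_right hc]

theorem card_subtype_fin_eq_count (n : ℕ) : Nat.card {i : Fin n // p i} = count p n := by
  rw [count_eq_card_fintype, ← Nat.card_eq_fintype_card]
  exact Nat.card_congr
    { toFun := fun i ↦ ⟨i.1, i.1.2, i.2⟩
      invFun := fun k ↦ ⟨⟨k.1, k.2.1⟩, k.2.2⟩ }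

theorem mul_prod_le_count_forall_mod_lt_mul_prod {k : ℕ} (Q C : Fin k → ℕ) (hQ : ∀ j, 0 < Q j)
    (hdvd : ∀ i j, i ≤ j → Q j ∣ Q i) (hC : ∀ j, C j ≤ Q j) (t : ℕ) :
    t * ∏ j, C j ≤ count (fun s ↦ ∀ j, s % Q j < C j) t * ∏ j, Q j := by
  induction k generalizing t with
  | zero => simp
  | succ k ih =>
    set P := fun s ↦ ∀ j : Fin k, s % Q j.succ < C j.succ
    have hP : Periodic P (Q 0) := fun s ↦ by
      refine propext (forall_congr' fun j ↦ ?_)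
      obtain ⟨c, hc⟩ := hdvd 0 j.succ (Fin.zero_le _)
      rw [hc, add_mul_mod_self_left]
    have ih' := ih (Q ∘ Fin.succ) (C ∘ Fin.succ) (fun j ↦ hQ _)
      (fun i j hij ↦ hdvd _ _ (Fin.succ_le_succ_iff.2 hij)) (fun j ↦ hC _)
    simp only [comp_apply] at ih'
    simp_rw [Fin.forall_fin_succ]
    rw [count_mod_lt_and_of_periodic hP (hQ 0) (hC 0), Fin.prod_univ_succ,
      Fin.prod_univ_succ]
    set q := t / Q 0
    set r := t % Q 0
    have hr : r * C 0 ≤ min r (C 0) * Q 0 := by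
      rcases le_total r (C 0) with h | h
      · rw [min_eq_left h]; exact Nat.mul_le_mul_left _ (hC 0)
      · rw [min_eq_right h, mul_comm]; exact Nat.mul_le_mul_left _ (mod_lt t (hQ 0)).le
    set A := ∏ j : Fin k, C j.succ
    set B := ∏ j : Fin k, Q j.succ
    calc t * (C 0 * A)
        = q * Q 0 * (C 0 * A) + r * C 0 * A := by rw [← div_add_mod' t (Q 0)]; ring
      _ ≤ q * Q 0 * (count P (C 0) * B) + min r (C 0) * Q 0 * A :=
          add_le_add (Nat.mul_le_mul_left _ (ih' _)) (Nat.mul_le_mul_right _ hr)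
      _ = q * Q 0 * (count P (C 0) * B) + Q 0 * (min r (C 0) * A) := by ring
      _ ≤ q * Q 0 * (count P (C 0) * B) + Q 0 * (count P (min r (C 0)) * B) :=
          Nat.add_le_add_left (Nat.mul_le_mul_left _ (ih' _)) _
      _ = (q * count P (C 0) + count P (min r (C 0))) * (Q 0 * B) := by ring

end Nat

section Fract

variable {K : Type*} [Field K] [LinearOrder K] [IsStrictOrderedRing K] [FloorRing K]

theorem Int.fract_natCast_mul_pow_div_pow {b : ℕ} (hb : b ≠ 0) (i j m : ℕ) :
    Int.fract ((i : K) * b ^ j / b ^ m) =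
      ((i % b ^ (m - j) : ℕ) : K) / ((b ^ (m - j) : ℕ) : K) := by
  rcases le_total j m with h | h
  · have hbj : (b : K) ^ j ≠ 0 := pow_ne_zero _ (Nat.cast_ne_zero.2 hb)
    rw [← pow_sub_mul_pow (b : K) h, mul_div_mul_right _ _ hbj, ← Nat.cast_pow,
      Int.fract_div_natCast_eq_div_natCast_mod]
  · have hbm : (b : K) ^ m ≠ 0 := pow_ne_zero _ (Nat.cast_ne_zero.2 hb)
    rw [Nat.sub_eq_zero_of_le h, ← pow_sub_mul_pow (b : K) h, ← mul_assoc,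
      mul_div_cancel_right₀ _ hbm, ← Nat.cast_pow, ← Nat.cast_mul, Int.fract_natCast]
    simp [Nat.mod_one]

theorem Int.fract_natCast_mul_pow_div_pow_lt_iff {b : ℕ} (hb : b ≠ 0) (i j m : ℕ) (z : K) :
    Int.fract ((i : K) * b ^ j / b ^ m) < z ↔ i % b ^ (m - j) < ⌈z * b ^ (m - j)⌉₊ := by
  rw [Int.fract_natCast_mul_pow_div_pow hb, div_lt_iff₀ (by positivity), Nat.lt_ceil]
  push_cast; rfl

end Fract

theorem stmt17_general (b m d : ℕ) (hb : 2 ≤ b)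
    (z : Fin d → ℝ) (hz : ∀ j, z j ∈ Set.Icc (0:ℝ) 1) :
    ∏ j, z j ≤ (Nat.card {i : Fin (b ^ m) // ∀ j : Fin d,
        Int.fract ((i : ℝ) * (b : ℝ) ^ (j : ℕ) / (b ^ m : ℝ)) < z j} : ℝ) / (b ^ m : ℝ) := by
  have hb0 : b ≠ 0 := by omega
  set C : Fin d → ℕ := fun j ↦ ⌈z j * (b : ℝ) ^ (m - j)⌉₊
  have hcard : Nat.card {i : Fin (b ^ m) // ∀ j : Fin d,
      Int.fract ((i : ℝ) * (b : ℝ) ^ (j : ℕ) / (b ^ m : ℝ)) < z j}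
        = Nat.count (fun s ↦ ∀ j : Fin d, s % b ^ (m - j) < C j) (b ^ m) := by
    rw [← Nat.card_subtype_fin_eq_count]
    exact Nat.card_congr (Equiv.subtypeEquivRight fun i ↦ forall_congr' fun j ↦
      Int.fract_natCast_mul_pow_div_pow_lt_iff hb0 _ _ _ _)
  have hC : ∀ j, C j ≤ b ^ (m - j) := fun j ↦
    Nat.ceil_le.2 (by push_cast; exact mul_le_of_le_one_left (by positivity) (hz j).2)
  have hcount := Nat.mul_prod_le_count_forall_mod_lt_mul_prod (fun j ↦ b ^ (m - j)) C
    (fun j ↦ pow_pos (Nat.pos_of_ne_zero hb0) _)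
    (fun i j hij ↦ pow_dvd_pow b (Nat.sub_le_sub_left hij m)) hC (b ^ m)
  have hzC : (∏ j, z j) * ∏ j : Fin d, (b : ℝ) ^ (m - j) ≤ ∏ j, (C j : ℝ) := by
    rw [← prod_mul_distrib]
    exact prod_le_prod (fun j _ ↦ mul_nonneg (hz j).1 (by positivity)) (fun j _ ↦ Nat.le_ceil _)
  rw [hcard, le_div_iff₀ (by positivity)]
  have hQ : (0 : ℝ) < ∏ j : Fin d, (b : ℝ) ^ (m - j) := by positivity
  refine le_of_mul_le_mul_right ?_ hQ
  calc (∏ j, z j) * (b : ℝ) ^ m * ∏ j : Fin d, (b : ℝ) ^ (m - j)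
      ≤ (b : ℝ) ^ m * ∏ j, (C j : ℝ) := by rw [mul_right_comm, mul_comm]; gcongr
    _ ≤ _ := by exact_mod_cast hcount

/-- For `m ≥ d ≥ 1` and `b ≥ 2`, the rank-1 lattice points
`x_i = (i/n, ib/n, …, ib^{d-1}/n) mod 1`, `n = b^m`, form an NNLD point set. -/
theorem stmt17 (b m d : ℕ) (hb : 2 ≤ b) (hd : 1 ≤ d) (hmd : d ≤ m)
    (z : Fin d → ℝ) (hz : ∀ j, z j ∈ Set.Icc (0:ℝ) 1) :
    ∏ j, z j ≤ (Nat.card {i : Fin (b ^ m) // ∀ j : Fin d,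
        Int.fract ((i : ℝ) * (b : ℝ) ^ (j : ℕ) / (b ^ m : ℝ)) < z j} : ℝ) / (b ^ m : ℝ) :=
  stmt17_general b m d hb z hz
end

section
/- If f:[0,1]^d → ℝ is given by f(x) = c + λ·ν([0,x]) for a Borel probability measure ν on [0,1]^d, λ ≥ 0, c ∈ ℝ, and P_n = {x_0,…,x_{n-1}} ⊂ [0,1]^d, then the signed error satisfies (1/n)∑_i f(x_i) − ∫_{[0,1]^d} f dx = ∫_{[0,1]^d} λ·δ̄(1−z; P̃_n) dν(z), where P̃_n = {1−x_0,…,1−x_{n-1}} and δ̄(w; Q) = (1/n)·#{i : q_i ∈ [0,w]} − vol([0,w]). -/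
/-!
The constant `c` cancels because `[0,1]^d` has volume one, so only the `λ`-part matters.
On the quadrature side, `ν([0,x_i]) = ∫ 1{z ≤ x_i} dν(z)` and `z ≤ x_i ↔ 1 - x_i ≤ 1 - z`,
so summing over `i` gives the counting function of the reflected points at `1 - z`.
On the integral side, Tonelli on `{(y, z) | z ≤ y}` gives
`∫_{[0,1]^d} ν([0,y]) dy = ∫ vol([z,1]) dν(z) = ∫ ∏_j (1 - z_j) dν(z)`.
-/

open MeasureTheory Set

section Orthant

variable {α : Type*} [MeasurableSpace α] [TopologicalSpace α] [OpensMeasurableSpace α]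
  [PartialOrder α] [OrderClosedTopology α] [SecondCountableTopology α]

theorem measurable_measure_Iic (ν : Measure α) [SFinite ν] :
    Measurable fun y => ν (Iic y) :=
  measurable_measure_prodMk_left (ν := ν) (measurableSet_le measurable_snd measurable_fst)

theorem measurable_measure_Ici (μ : Measure α) [SFinite μ] :
    Measurable fun z => μ (Ici z) :=
  measurable_measure_prodMk_right (μ := μ) (measurableSet_le measurable_snd measurable_fst)

theorem lintegral_measure_Iic_eq_lintegral_measure_Ici (μ ν : Measure α) [SFinite μ]
    [SFinite ν] : ∫⁻ y, ν (Iic y) ∂μ = ∫⁻ z, μ (Ici z) ∂ν := by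
  have hS : MeasurableSet {p : α × α | p.2 ≤ p.1} :=
    measurableSet_le measurable_snd measurable_fst
  exact (Measure.prod_apply hS).symm.trans (Measure.prod_apply_symm hS)

theorem integral_measureReal_Iic_eq_integral_measureReal_Ici (μ ν : Measure α)
    [IsFiniteMeasure μ] [IsFiniteMeasure ν] :
    ∫ y, ν.real (Iic y) ∂μ = ∫ z, μ.real (Ici z) ∂ν := by
  simp only [measureReal_def]
  rw [integral_toReal (measurable_measure_Iic ν).aemeasurable
      (ae_of_all _ fun _ => measure_lt_top _ _),
    integral_toReal (measurable_measure_Ici μ).aemeasurable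
      (ae_of_all _ fun _ => measure_lt_top _ _),
    lintegral_measure_Iic_eq_lintegral_measure_Ici]

theorem integrable_measureReal_Iic (μ ν : Measure α) [IsFiniteMeasure μ] [IsFiniteMeasure ν] :
    Integrable (fun y => ν.real (Iic y)) μ :=
  .of_bound (measurable_measure_Iic ν).ennreal_toReal.aestronglyMeasurable (ν.real univ)
    (ae_of_all _ fun _ => by
      rw [Real.norm_of_nonneg measureReal_nonneg]; exact measureReal_mono (subset_univ _))

theorem integrable_measureReal_Ici (μ ν : Measure α) [IsFiniteMeasure μ] [IsFiniteMeasure ν] :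
    Integrable (fun z => μ.real (Ici z)) ν :=
  .of_bound (measurable_measure_Ici μ).ennreal_toReal.aestronglyMeasurable (μ.real univ)
    (ae_of_all _ fun _ => by
      rw [Real.norm_of_nonneg measureReal_nonneg]; exact measureReal_mono (subset_univ _))

end Orthant

section Counting

variable {α ι : Type*} [Preorder α] [Fintype ι]

theorem natCard_le_eq_sum_indicator (x : ι → α) (z : α) :
    (Nat.card {i // z ≤ x i} : ℝ) = ∑ i, (Iic (x i)).indicator 1 z := by
  classical
  simp [Nat.card_eq_fintype_card, Fintype.card_subtype, indicator_apply]

variable [MeasurableSpace α] [TopologicalSpace α] [OpensMeasurableSpace α] [ClosedIicTopology α]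

theorem integrable_natCard_le (ν : Measure α) [IsFiniteMeasure ν] (x : ι → α) :
    Integrable (fun z => (Nat.card {i // z ≤ x i} : ℝ)) ν := by
  simp only [natCard_le_eq_sum_indicator]
  exact integrable_finsetSum _ fun i _ => (integrable_const 1).indicator measurableSet_Iic

theorem integral_natCard_le (ν : Measure α) [IsFiniteMeasure ν] (x : ι → α) :
    ∫ z, (Nat.card {i // z ≤ x i} : ℝ) ∂ν = ∑ i, ν.real (Iic (x i)) := by
  simp only [natCard_le_eq_sum_indicator]
  rw [integral_finsetSum _ fun i _ => (integrable_const 1).indicator measurableSet_Iic]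
  exact Finset.sum_congr rfl fun i _ => integral_indicator_one measurableSet_Iic

end Counting

theorem measure_Icc_eq_measure_Iic {α : Type*} [Preorder α] [MeasurableSpace α]
    {ν : Measure α} {a : α} (ha : ν (Ici a)ᶜ = 0) (y : α) : ν (Icc a y) = ν (Iic y) := by
  rw [← Ici_inter_Iic, inter_comm, measure_inter_conull ha]

theorem measureReal_restrict_Icc_Ici {ι : Type*} [Fintype ι] {a b z : ι → ℝ}
    (hz : z ∈ Icc a b) : (volume.restrict (Icc a b)).real (Ici z) = ∏ j, (b j - z j) := by
  have hinter : Ici z ∩ Icc a b = Icc z b := by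
    ext w
    simp only [mem_inter_iff, mem_Ici, mem_Icc]
    exact ⟨fun h => ⟨h.1, h.2.2⟩, fun h => ⟨h.1, hz.1.trans h.1, h.2⟩⟩
  rw [measureReal_restrict_apply measurableSet_Ici, hinter, measureReal_def,
    Real.volume_Icc_pi_toReal hz.2]

theorem stmt19_general (d n : ℕ) (hn : 0 < n)
    (ν : Measure (Fin d → ℝ)) [IsProbabilityMeasure ν]
    (hνsupp : ν (Set.Icc (0 : Fin d → ℝ) 1)ᶜ = 0)
    (lam c : ℝ)
    (f : (Fin d → ℝ) → ℝ)
    (hf : ∀ x, f x = c + lam * (ν (Set.Icc 0 x)).toReal)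
    (x : Fin n → Fin d → ℝ) :
    (1 / n : ℝ) * ∑ i, f (x i) - ∫ y in Set.Icc (0 : Fin d → ℝ) 1, f y =
      ∫ z in Set.Icc (0 : Fin d → ℝ) 1,
        lam * ((Nat.card {i : Fin n // ∀ j, 1 - x i j ≤ 1 - z j} : ℝ) / n
          - ∏ j, (1 - z j)) ∂ν := by
  set I := Icc (0 : Fin d → ℝ) 1
  set μ := volume.restrict I
  have hνI : ∀ᵐ z ∂ν, z ∈ I := ae_iff.2 hνsupp
  have hIci : ν (Ici 0)ᶜ = 0 :=
    measure_mono_null (compl_subset_compl.2 Icc_subset_Ici_self) hνsupp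
  have hf' : f = fun y => c + lam * ν.real (Iic y) := by
    funext y
    rw [hf, measureReal_def, measure_Icc_eq_measure_Iic hIci]
  have hcard (z : Fin d → ℝ) :
      Nat.card {i // ∀ j, 1 - x i j ≤ 1 - z j} = Nat.card {i // z ≤ x i} :=
    Nat.card_congr <| Equiv.subtypeEquivRight fun i => by
      simp only [Pi.le_def, sub_le_sub_iff_left]
  have hbox : ∀ᵐ z ∂ν, ∏ j, (1 - z j) = μ.real (Ici z) :=
    hνI.mono fun z hz => (measureReal_restrict_Icc_Ici hz).symm
  have : IsProbabilityMeasure μ := ⟨by simp [μ, I, Real.volume_Icc_pi]⟩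
  have hn' : (n : ℝ) ≠ 0 := Nat.cast_ne_zero.2 hn.ne'
  have hLHS : (1 / n : ℝ) * ∑ i, f (x i) - ∫ y, f y ∂μ =
      lam * ((∑ i, ν.real (Iic (x i))) / n - ∫ y, ν.real (Iic y) ∂μ) := by
    rw [hf', integral_add (integrable_const c) ((integrable_measureReal_Iic μ ν).const_mul lam),
      integral_const, integral_const_mul, smul_eq_mul, probReal_univ, Finset.sum_add_distrib,
      Finset.sum_const, Finset.card_univ, Fintype.card_fin, nsmul_eq_mul, ← Finset.mul_sum]
    field_simp
    ring
  have hRHS : ∫ z in I, lam * ((Nat.card {i // ∀ j, 1 - x i j ≤ 1 - z j} : ℝ) / n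
        - ∏ j, (1 - z j)) ∂ν =
      lam * ((∑ i, ν.real (Iic (x i))) / n - ∫ z, μ.real (Ici z) ∂ν) := by
    rw [Measure.restrict_eq_self_of_ae_mem hνI]
    simp_rw [hcard]
    rw [integral_congr_ae (hbox.mono fun z hz => by rw [hz]), integral_const_mul,
      integral_sub ((integrable_natCard_le ν x).div_const _) (integrable_measureReal_Ici μ ν),
      integral_div, integral_natCard_le]
  rw [hLHS, hRHS, integral_measureReal_Iic_eq_integral_measureReal_Ici]

/-- Signed error identity: for `f(x) = c + λ·ν([0,x])` with `ν` a Borel probability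
measure on `[0,1]^d`, the error of the equal-weight rule equals the `ν`-integral of
`λ` times the closed-box local discrepancy of the reflected point set evaluated at
`1 − z`. -/
theorem stmt19 (d n : ℕ) (hn : 0 < n)
    (ν : Measure (Fin d → ℝ)) [IsProbabilityMeasure ν]
    (hνsupp : ν (Set.Icc (0 : Fin d → ℝ) 1)ᶜ = 0)
    (lam c : ℝ) (hlam : 0 ≤ lam)
    (f : (Fin d → ℝ) → ℝ)
    (hf : ∀ x, f x = c + lam * (ν (Set.Icc 0 x)).toReal)
    (x : Fin n → Fin d → ℝ) (hx : ∀ i j, x i j ∈ Set.Icc (0:ℝ) 1) :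
    (1 / n : ℝ) * ∑ i, f (x i) - ∫ y in Set.Icc (0 : Fin d → ℝ) 1, f y =
      ∫ z in Set.Icc (0 : Fin d → ℝ) 1,
        lam * ((Nat.card {i : Fin n // ∀ j, 1 - x i j ≤ 1 - z j} : ℝ) / n
          - ∏ j, (1 - z j)) ∂ν :=
  stmt19_general d n hn ν hνsupp lam c f hf x
end
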